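/- arXiv:1612.03535 — 11 statements merged into one kernel-verified Lean document; each statement's English description precedes it below -/
import Mathlib

section
/- For every x ∈ M there exist c ∈ {0,1} and T > 0 such that g(ψ_t(x)) = c for all t ≥ T; likewise there exist c' ∈ {0,1} and T' > 0 such that g(ψ_t(x)) = c' for all t ≤ −T'. In particular the limits lim_{t→+∞} g(ψ_t(x)) and lim_{t→−∞} g(ψ_t(x)) exist and lie in {0,1}. -/
open Filter Topology

/-- The set `X_{i,j}` of points whose `g`-value along the flow tends to `i`
as `t → -∞` and to `j` as `t → +∞`. -/
def Xset {M : Type*} (ψ : ℝ → M → M) (g : M → ℝ) (i j : ℝ) : Set M :=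
  {x | Tendsto (fun t => g (ψ t x)) atBot (nhds i) ∧
       Tendsto (fun t => g (ψ t x)) atTop (nhds j)}

/-- The Fuller average `g_n(x) = (1/(2n)) ∫_{-n}^{n} g(ψ_t(x)) dt`. -/
noncomputable def gAvg {M : Type*} (ψ : ℝ → M → M) (g : M → ℝ) (n : ℕ) (x : M) : ℝ :=
  (1 / (2 * (n : ℝ))) * ∫ t in (-(n : ℝ))..(n : ℝ), g (ψ t x)

/-- The function `p(x) = Σ_{n=1}^∞ 2^{-n} g_n(x)`. -/
noncomputable def pFun {M : Type*} (ψ : ℝ → M → M) (g : M → ℝ) (x : M) : ℝ :=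
  ∑' n : ℕ, (1 / 2 : ℝ) ^ (n + 1) * gAvg ψ g (n + 1) x

/-- The set `U_{0,0}` of points of `X_{0,0}` whose orbit is not entirely at `g`-value 0. -/
def U00 {M : Type*} (ψ : ℝ → M → M) (g : M → ℝ) : Set M :=
  {x ∈ Xset ψ g 0 0 | ∃ t : ℝ, g (ψ t x) ≠ 0}

/-- The set `U_{1,1}` of points of `X_{1,1}` whose orbit is not entirely at `g`-value 1. -/
def U11 {M : Type*} (ψ : ℝ → M → M) (g : M → ℝ) : Set M :=
  {x ∈ Xset ψ g 1 1 | ∃ t : ℝ, g (ψ t x) ≠ 1}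

/-! If `g` takes a value strictly between `0` and `1` at some time `t₀` of the orbit of `x`,
the hypothesis puts `g` in `{0, 1}` along the orbit at all times outside `[t₀ - ℓ, t₀ + ℓ]`;
otherwise `g ∈ {0, 1}` along the whole orbit. On each half-line beyond that window,
`t ↦ g (ψ t x)` is a continuous map from a connected set to the discrete set `{0, 1}`, hence
constant. -/

section EventuallyConst

variable {β : Type*} [TopologicalSpace β] {S : Set β} {f : ℝ → β}

theorem Continuous.exists_eventually_eq_atTop_of_isDiscrete (hf : Continuous f)
    (hS : IsDiscrete S) (hfS : ∀ᶠ t in atTop, f t ∈ S) :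
    ∃ c ∈ S, ∀ᶠ t in atTop, f t = c := by
  obtain ⟨a, ha⟩ := hfS.exists_forall_of_atTop
  have hconst : ∀ t ≥ a, f t = f a := fun t ht =>
    isPreconnected_Ici.constant_of_mapsTo hS hf.continuousOn (fun s hs => ha s hs) ht
      Set.self_mem_Ici
  exact ⟨f a, ha a le_rfl, eventually_atTop.2 ⟨a, hconst⟩⟩

theorem Continuous.exists_eventually_eq_atBot_of_isDiscrete (hf : Continuous f)
    (hS : IsDiscrete S) (hfS : ∀ᶠ t in atBot, f t ∈ S) :
    ∃ c ∈ S, ∀ᶠ t in atBot, f t = c := by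
  obtain ⟨c, hcS, hc⟩ := (hf.comp continuous_neg).exists_eventually_eq_atTop_of_isDiscrete hS
    (tendsto_neg_atTop_atBot.eventually hfS)
  refine ⟨c, hcS, (tendsto_neg_atBot_atTop.eventually hc).mono fun t ht => ?_⟩
  simpa using ht

theorem exists_pos_forall_ge_eq_of_eventually_atTop {c : β} (h : ∀ᶠ t in atTop, f t = c) :
    ∃ T > (0 : ℝ), (∀ t ≥ T, f t = c) ∧ Tendsto f atTop (𝓝 c) := by
  obtain ⟨a, ha⟩ := eventually_atTop.1 h
  exact ⟨max a 1, by positivity, fun t ht => ha t (le_of_max_le_left ht),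
    tendsto_nhds_of_eventually_eq h⟩

theorem exists_pos_forall_le_neg_eq_of_eventually_atBot {c : β} (h : ∀ᶠ t in atBot, f t = c) :
    ∃ T > (0 : ℝ), (∀ t ≤ -T, f t = c) ∧ Tendsto f atBot (𝓝 c) := by
  obtain ⟨a, ha⟩ := eventually_atBot.1 h
  refine ⟨max (-a) 1, by positivity, fun t ht => ha t ?_, tendsto_nhds_of_eventually_eq h⟩
  linarith [le_max_left (-a) 1]

end EventuallyConst

theorem exists_forall_abs_sub_gt_mem_zero_one {M : Type*} (ψ : ℝ → M → M)
    (hadd : ∀ s t x, ψ (s + t) x = ψ s (ψ t x)) (g : M → ℝ)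
    (hg01 : ∀ x, g x ∈ Set.Icc (0 : ℝ) 1) (ℓ : ℝ)
    (hgate : ∀ x, 0 < g x → g x < 1 → ∀ t : ℝ, ℓ < |t| →
      g (ψ t x) = 0 ∨ g (ψ t x) = 1)
    (x : M) : ∃ t₀ : ℝ, ∀ t, ℓ < |t - t₀| → g (ψ t x) ∈ ({0, 1} : Set ℝ) := by
  by_cases hall : ∀ t, g (ψ t x) ∈ ({0, 1} : Set ℝ)
  · exact ⟨0, fun t _ => hall t⟩
  obtain ⟨t₀, ht₀⟩ := not_forall.1 hall
  simp only [Set.mem_insert_iff, Set.mem_singleton_iff, not_or] at ht₀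
  have hpos : 0 < g (ψ t₀ x) := (hg01 _).1.lt_of_ne' ht₀.1
  have hlt : g (ψ t₀ x) < 1 := (hg01 _).2.lt_of_ne ht₀.2
  refine ⟨t₀, fun t ht => ?_⟩
  rw [← sub_add_cancel t t₀, hadd]
  exact hgate _ hpos hlt _ ht

theorem stmt_0_general
    {M : Type*} [TopologicalSpace M] (ψ : ℝ → M → M)
    (hcont : Continuous fun q : ℝ × M => ψ q.1 q.2)
    (hadd : ∀ s t x, ψ (s + t) x = ψ s (ψ t x))
    (g : M → ℝ) (hg : Continuous g) (hg01 : ∀ x, g x ∈ Set.Icc (0 : ℝ) 1)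
    (ℓ : ℝ)
    (hgate : ∀ x, 0 < g x → g x < 1 → ∀ t : ℝ, ℓ < |t| →
      g (ψ t x) = 0 ∨ g (ψ t x) = 1)
    (x : M) :
    (∃ c ∈ ({0, 1} : Set ℝ), ∃ T > (0 : ℝ),
        (∀ t ≥ T, g (ψ t x) = c) ∧
        Filter.Tendsto (fun t => g (ψ t x)) Filter.atTop (nhds c)) ∧
    (∃ c' ∈ ({0, 1} : Set ℝ), ∃ T' > (0 : ℝ),
        (∀ t ≤ -T', g (ψ t x) = c') ∧
        Filter.Tendsto (fun t => g (ψ t x)) Filter.atBot (nhds c')) := by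
  have hcont_orbit : Continuous fun t => g (ψ t x) := by fun_prop
  have hS : IsDiscrete ({0, 1} : Set ℝ) := (Set.toFinite _).isDiscrete
  obtain ⟨t₀, hfar⟩ := exists_forall_abs_sub_gt_mem_zero_one ψ hadd g hg01 ℓ hgate x
  have hfwd : ∀ᶠ t in atTop, g (ψ t x) ∈ ({0, 1} : Set ℝ) :=
    (eventually_gt_atTop (t₀ + ℓ)).mono fun t ht => hfar t (lt_abs.2 (Or.inl (by linarith)))
  have hbwd : ∀ᶠ t in atBot, g (ψ t x) ∈ ({0, 1} : Set ℝ) :=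
    (eventually_lt_atBot (t₀ - ℓ)).mono fun t ht => hfar t (lt_abs.2 (Or.inr (by linarith)))
  obtain ⟨c, hc, hc_eq⟩ := hcont_orbit.exists_eventually_eq_atTop_of_isDiscrete hS hfwd
  obtain ⟨c', hc', hc'_eq⟩ := hcont_orbit.exists_eventually_eq_atBot_of_isDiscrete hS hbwd
  exact ⟨⟨c, hc, exists_pos_forall_ge_eq_of_eventually_atTop hc_eq⟩,
    ⟨c', hc', exists_pos_forall_le_neg_eq_of_eventually_atBot hc'_eq⟩⟩

/-- along the flow, `g` is eventually constant (equal to 0 or 1)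
in forward time and in backward time; in particular the limits as `t → ±∞`
exist and lie in `{0,1}`. -/
theorem stmt_0
    {M : Type*} [TopologicalSpace M] (ψ : ℝ → M → M)
    (hcont : Continuous fun q : ℝ × M => ψ q.1 q.2)
    (hzero : ∀ x, ψ 0 x = x)
    (hadd : ∀ s t x, ψ (s + t) x = ψ s (ψ t x))
    (g : M → ℝ) (hg : Continuous g) (hg01 : ∀ x, g x ∈ Set.Icc (0 : ℝ) 1)
    (ℓ : ℝ) (hℓ : 0 < ℓ)
    (hgate : ∀ x, 0 < g x → g x < 1 → ∀ t : ℝ, ℓ < |t| →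
      g (ψ t x) = 0 ∨ g (ψ t x) = 1)
    (x : M) :
    (∃ c ∈ ({0, 1} : Set ℝ), ∃ T > (0 : ℝ),
        (∀ t ≥ T, g (ψ t x) = c) ∧
        Filter.Tendsto (fun t => g (ψ t x)) Filter.atTop (nhds c)) ∧
    (∃ c' ∈ ({0, 1} : Set ℝ), ∃ T' > (0 : ℝ),
        (∀ t ≤ -T', g (ψ t x) = c') ∧
        Filter.Tendsto (fun t => g (ψ t x)) Filter.atBot (nhds c')) :=
  stmt_0_general ψ hcont hadd g hg hg01 ℓ hgate x
end

section
/- M is the union of the four sets X_{0,0}, X_{0,1}, X_{1,0}, and X_{1,1}, and these four sets are pairwise disjoint. -/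
open Filter Topology

/-!
Along an orbit, `t ↦ g (ψ_t x)` is either `{0,1}`-valued everywhere, or it takes a value
in `(0,1)` at some time `s`; applying the hypothesis to `ψ_s x` then shows it is `{0,1}`-valued
for `|t| > |s| + ℓ`. A continuous function into the discrete set `{0,1}` is constant on each of
the connected half-lines `(c, ∞)` and `(-∞, -c)`, so both limits exist and lie in `{0,1}`.
Disjointness is uniqueness of limits.
-/

open Set

theorem IsPreconnected.exists_tendsto_of_mapsTo {α β : Type*} [TopologicalSpace α]
    [TopologicalSpace β] {S : Set α} (hS : IsPreconnected S) {l : Filter α} [l.NeBot]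
    (hSl : S ∈ l) {T : Set β} (hT : IsDiscrete T) {f : α → β} (hc : ContinuousOn f S)
    (hTm : MapsTo f S T) : ∃ y ∈ T, Tendsto f l (𝓝 y) := by
  obtain ⟨x, hx⟩ := Filter.nonempty_of_mem hSl
  refine ⟨f x, hTm hx, tendsto_const_nhds.congr' ?_⟩
  filter_upwards [hSl] with y hy using hS.constant_of_mapsTo hT hc hTm hx hy

lemma Xset_disjoint {M : Type*} (ψ : ℝ → M → M) (g : M → ℝ) {i j i' j' : ℝ}
    (hne : (i, j) ≠ (i', j')) : Disjoint (Xset ψ g i j) (Xset ψ g i' j') :=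
  disjoint_left.mpr fun _ hx hx' =>
    hne (Prod.ext (tendsto_nhds_unique hx.1 hx'.1) (tendsto_nhds_unique hx.2 hx'.2))

lemma exists_forall_abs_gt_orbit_mem_zero_one {M : Type*} (ψ : ℝ → M → M)
    (hadd : ∀ s t x, ψ (s + t) x = ψ s (ψ t x))
    (g : M → ℝ) (hg01 : ∀ x, g x ∈ Icc (0 : ℝ) 1) (ℓ : ℝ)
    (hgate : ∀ x, 0 < g x → g x < 1 → ∀ t : ℝ, ℓ < |t| →
      g (ψ t x) = 0 ∨ g (ψ t x) = 1) (x : M) :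
    ∃ c, ∀ t, c < |t| → g (ψ t x) ∈ ({0, 1} : Set ℝ) := by
  by_cases hmid : ∃ s, 0 < g (ψ s x) ∧ g (ψ s x) < 1
  · obtain ⟨s, hs0, hs1⟩ := hmid
    refine ⟨|s| + ℓ, fun t ht => ?_⟩
    have hshift : ψ (t - s) (ψ s x) = ψ t x := by rw [← hadd, sub_add_cancel]
    have hgap : ℓ < |t - s| := by linarith [abs_sub_abs_le_abs_sub t s]
    simpa [hshift] using hgate (ψ s x) hs0 hs1 (t - s) hgap
  · push Not at hmid
    refine ⟨0, fun t _ => ?_⟩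
    obtain ⟨h0, h1⟩ := hg01 (ψ t x)
    rcases h0.eq_or_lt with h0 | h0
    · exact Or.inl h0.symm
    · exact Or.inr (le_antisymm h1 (hmid t h0))

theorem stmt_1_general
    {M : Type*} [TopologicalSpace M] (ψ : ℝ → M → M)
    (hcont : Continuous fun q : ℝ × M => ψ q.1 q.2)
    (hadd : ∀ s t x, ψ (s + t) x = ψ s (ψ t x))
    (g : M → ℝ) (hg : Continuous g) (hg01 : ∀ x, g x ∈ Set.Icc (0 : ℝ) 1)
    (ℓ : ℝ)
    (hgate : ∀ x, 0 < g x → g x < 1 → ∀ t : ℝ, ℓ < |t| →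
      g (ψ t x) = 0 ∨ g (ψ t x) = 1) :
    (Xset ψ g 0 0 ∪ Xset ψ g 0 1 ∪ Xset ψ g 1 0 ∪ Xset ψ g 1 1 = Set.univ) ∧
    (∀ i j i' j' : ℝ, i ∈ ({0, 1} : Set ℝ) → j ∈ ({0, 1} : Set ℝ) →
      i' ∈ ({0, 1} : Set ℝ) → j' ∈ ({0, 1} : Set ℝ) →
      (i, j) ≠ (i', j') → Disjoint (Xset ψ g i j) (Xset ψ g i' j')) := by
  refine ⟨eq_univ_of_forall fun x => ?_, fun i j i' j' _ _ _ _ hne => Xset_disjoint ψ g hne⟩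
  obtain ⟨c, hc⟩ := exists_forall_abs_gt_orbit_mem_zero_one ψ hadd g hg01 ℓ hgate x
  have horbit : Continuous fun t => g (ψ t x) :=
    hg.comp (hcont.comp (continuous_id.prodMk continuous_const))
  have hpair : IsDiscrete ({0, 1} : Set ℝ) := (toFinite _).isDiscrete
  obtain ⟨i, hi, hbot⟩ := isPreconnected_Iio.exists_tendsto_of_mapsTo (Iio_mem_atBot (-c))
    hpair horbit.continuousOn fun t ht => hc t (by linarith [neg_le_abs t, mem_Iio.mp ht])
  obtain ⟨j, hj, htop⟩ := isPreconnected_Ioi.exists_tendsto_of_mapsTo (Ioi_mem_atTop c)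
    hpair horbit.continuousOn fun t ht => hc t (by linarith [le_abs_self t, mem_Ioi.mp ht])
  have hx : x ∈ Xset ψ g i j := ⟨hbot, htop⟩
  rcases hi with rfl | rfl <;> rcases hj with rfl | rfl <;> simp [hx]

/-- `M` is the union of the four sets `X_{0,0}`, `X_{0,1}`,
`X_{1,0}`, `X_{1,1}`, and these four sets are pairwise disjoint. -/
theorem stmt_1
    {M : Type*} [TopologicalSpace M] (ψ : ℝ → M → M)
    (hcont : Continuous fun q : ℝ × M => ψ q.1 q.2)
    (hzero : ∀ x, ψ 0 x = x)
    (hadd : ∀ s t x, ψ (s + t) x = ψ s (ψ t x))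
    (g : M → ℝ) (hg : Continuous g) (hg01 : ∀ x, g x ∈ Set.Icc (0 : ℝ) 1)
    (ℓ : ℝ) (hℓ : 0 < ℓ)
    (hgate : ∀ x, 0 < g x → g x < 1 → ∀ t : ℝ, ℓ < |t| →
      g (ψ t x) = 0 ∨ g (ψ t x) = 1) :
    (Xset ψ g 0 0 ∪ Xset ψ g 0 1 ∪ Xset ψ g 1 0 ∪ Xset ψ g 1 1 = Set.univ) ∧
    (∀ i j i' j' : ℝ, i ∈ ({0, 1} : Set ℝ) → j ∈ ({0, 1} : Set ℝ) →
      i' ∈ ({0, 1} : Set ℝ) → j' ∈ ({0, 1} : Set ℝ) →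
      (i, j) ≠ (i', j') → Disjoint (Xset ψ g i j) (Xset ψ g i' j')) :=
  stmt_1_general ψ hcont hadd g hg hg01 ℓ hgate
end

section
/- The subsets X_{0,0} and X_{1,1} are closed in M. -/
open Filter Topology

/-!
Along an orbit, `u t = g (ψ t x)` can lie strictly between `0` and `1` only within distance `ℓ`
of any one time where it does so. If `u → 0` at both ends and `u` is not identically `0`, the
intermediate value theorem gives such a time `s`, and then `u` vanishes outside `[s - ℓ, s + ℓ]`:
otherwise `u = 1` somewhere beyond, and on its way back to `0` it would have to cross `1/2`.
Hence `X_{0,0}` is the set of `x` with `u t₁ = 0 ∨ u t₂ = 0` whenever `2ℓ < |t₁ - t₂|`, an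
intersection of closed sets; and `X_{1,1}` is `X_{0,0}` for `1 - g`.
-/

lemma exists_mem_Ioo_of_ne_zero {u : ℝ → ℝ} (hu : Continuous u)
    (h01 : ∀ t, u t ∈ Set.Icc (0 : ℝ) 1) (hbot : Tendsto u atBot (𝓝 0)) {t : ℝ}
    (ht : u t ≠ 0) : ∃ s, 0 < u s ∧ u s < 1 := by
  rcases (h01 t).2.lt_or_eq with ht1 | ht1
  · exact ⟨t, (h01 t).1.lt_of_ne' ht, ht1⟩
  obtain ⟨t', ht'⟩ := (hbot.eventually_lt_const one_half_pos).exists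
  obtain ⟨s, hs⟩ := intermediate_value_univ t' t hu ⟨ht'.le, by rw [ht1]; norm_num⟩
  exact ⟨s, by rw [hs]; norm_num, by rw [hs]; norm_num⟩

def TransitsWithin (ℓ : ℝ) (u : ℝ → ℝ) : Prop :=
  ∀ s t, 0 < u s → u s < 1 → ℓ < |t - s| → u t = 0 ∨ u t = 1

namespace TransitsWithin

variable {ℓ : ℝ} {u : ℝ → ℝ}

lemma comp_neg (h : TransitsWithin ℓ u) : TransitsWithin ℓ (u ∘ Neg.neg) := by
  intro s t hs0 hs1 hst
  exact h (-s) (-t) hs0 hs1 (by rwa [neg_sub_neg, abs_sub_comm])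

lemma one_sub (h : TransitsWithin ℓ u) : TransitsWithin ℓ (fun t => 1 - u t) := by
  intro s t hs0 hs1 hst
  rcases h s t (by linarith) (by linarith) hst with ht | ht <;> simp [ht]

lemma eq_zero_of_add_lt (h : TransitsWithin ℓ u) (hu : Continuous u)
    (htop : Tendsto u atTop (𝓝 0)) {s t : ℝ} (hs0 : 0 < u s) (hs1 : u s < 1)
    (hst : s + ℓ < t) : u t = 0 := by
  have hgap : ∀ r, t ≤ r → u r = 0 ∨ u r = 1 := fun r hr =>
    h s r hs0 hs1 (lt_abs.2 (Or.inl (by linarith)))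
  refine (hgap t le_rfl).resolve_right fun ht1 => ?_
  obtain ⟨t', ht'small, htt'⟩ :=
    ((htop.eventually_lt_const one_half_pos).and (eventually_ge_atTop t)).exists
  obtain ⟨r, hr, hr_half⟩ := intermediate_value_Icc' htt' hu.continuousOn
    ⟨ht'small.le, by rw [ht1]; norm_num⟩
  rcases hgap r hr.1 with hr' | hr' <;> rw [hr'] at hr_half <;> norm_num at hr_half

lemma eq_zero (h : TransitsWithin ℓ u) (hu : Continuous u)
    (hbot : Tendsto u atBot (𝓝 0)) (htop : Tendsto u atTop (𝓝 0)) {s t : ℝ}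
    (hs0 : 0 < u s) (hs1 : u s < 1) (hst : ℓ < |t - s|) : u t = 0 := by
  rcases lt_abs.1 hst with hst | hst
  · exact h.eq_zero_of_add_lt hu htop hs0 hs1 (by linarith)
  · simpa using h.comp_neg.eq_zero_of_add_lt (s := -s) (t := -t) (hu.comp continuous_neg)
      (hbot.comp tendsto_neg_atTop_atBot) (by simpa using hs0) (by simpa using hs1)
      (by linarith)

lemma tendsto_zero_iff (h : TransitsWithin ℓ u) (hu : Continuous u)
    (h01 : ∀ t, u t ∈ Set.Icc (0 : ℝ) 1) :
    (Tendsto u atBot (𝓝 0) ∧ Tendsto u atTop (𝓝 0)) ↔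
      ∀ t₁ t₂, 2 * ℓ < |t₁ - t₂| → u t₁ = 0 ∨ u t₂ = 0 := by
  constructor
  · rintro ⟨hbot, htop⟩ t₁ t₂ hdist
    by_contra! hne
    obtain ⟨s, hs0, hs1⟩ := exists_mem_Ioo_of_ne_zero hu h01 hbot hne.1
    have hnear : ∀ t, u t ≠ 0 → |t - s| ≤ ℓ := fun t ht =>
      not_lt.1 fun hst => ht (h.eq_zero hu hbot htop hs0 hs1 hst)
    have := abs_sub_le t₁ s t₂
    linarith [hnear t₁ hne.1, hnear t₂ hne.2, abs_sub_comm s t₂]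
  · intro hsupp
    by_cases hzero : ∀ t, u t = 0
    · rw [funext hzero]
      exact ⟨tendsto_const_nhds, tendsto_const_nhds⟩
    obtain ⟨t₀, ht₀⟩ := not_forall.1 hzero
    have hfar : ∀ t, 2 * ℓ < |t - t₀| → u t = 0 := fun t ht =>
      (hsupp t₀ t (by rwa [abs_sub_comm])).resolve_left ht₀
    constructor <;> refine tendsto_const_nhds.congr' (EventuallyEq.symm ?_)
    · filter_upwards [eventually_lt_atBot (t₀ - 2 * ℓ)] with t ht
      exact hfar t (lt_abs.2 (Or.inr (by linarith)))
    · filter_upwards [eventually_gt_atTop (t₀ + 2 * ℓ)] with t ht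
      exact hfar t (lt_abs.2 (Or.inl (by linarith)))

end TransitsWithin

section Flow

variable {M : Type*} {ψ : ℝ → M → M} {g : M → ℝ} {ℓ : ℝ}

lemma transitsWithin_orbit (hadd : ∀ s t x, ψ (s + t) x = ψ s (ψ t x))
    (hgate : ∀ x, 0 < g x → g x < 1 → ∀ t : ℝ, ℓ < |t| → g (ψ t x) = 0 ∨ g (ψ t x) = 1)
    (x : M) : TransitsWithin ℓ (fun t => g (ψ t x)) := by
  intro s t hs0 hs1 hst
  simpa [← hadd] using hgate (ψ s x) hs0 hs1 (t - s) hst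

lemma isClosed_Xset_zero_zero [TopologicalSpace M]
    (hcont : Continuous fun q : ℝ × M => ψ q.1 q.2)
    (hg : Continuous g) (hg01 : ∀ x, g x ∈ Set.Icc (0 : ℝ) 1)
    (hT : ∀ x, TransitsWithin ℓ (fun t => g (ψ t x))) :
    IsClosed (Xset ψ g 0 0) := by
  have hset : Xset ψ g 0 0 = ⋂ (t₁ : ℝ) (t₂ : ℝ) (_ : 2 * ℓ < |t₁ - t₂|),
      ({x | g (ψ t₁ x) = 0} ∪ {x | g (ψ t₂ x) = 0}) := by
    ext x
    simp only [Set.mem_iInter]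
    exact (hT x).tendsto_zero_iff (hg.comp (hcont.comp (.prodMk_left x))) (fun t => hg01 _)
  have hcont_at : ∀ t, Continuous fun x => g (ψ t x) := fun t =>
    hg.comp (hcont.comp (.prodMk_right t))
  rw [hset]
  exact isClosed_iInter fun t₁ => isClosed_iInter fun t₂ => isClosed_iInter fun _ =>
    (isClosed_eq (hcont_at t₁) continuous_const).union
      (isClosed_eq (hcont_at t₂) continuous_const)

lemma Xset_one_one_eq : Xset ψ g 1 1 = Xset ψ (fun x => 1 - g x) 0 0 := by
  ext x
  simp only [Xset, Set.mem_ofPred_eq, ← tendsto_const_sub_iff (1 : ℝ) (c := 1), sub_self]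

end Flow

theorem stmt_2_general
    {M : Type*} [TopologicalSpace M] (ψ : ℝ → M → M)
    (hcont : Continuous fun q : ℝ × M => ψ q.1 q.2)
    (hadd : ∀ s t x, ψ (s + t) x = ψ s (ψ t x))
    (g : M → ℝ) (hg : Continuous g) (hg01 : ∀ x, g x ∈ Set.Icc (0 : ℝ) 1)
    (ℓ : ℝ)
    (hgate : ∀ x, 0 < g x → g x < 1 → ∀ t : ℝ, ℓ < |t| →
      g (ψ t x) = 0 ∨ g (ψ t x) = 1) :
    IsClosed (Xset ψ g 0 0) ∧ IsClosed (Xset ψ g 1 1) := by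
  have hT := transitsWithin_orbit hadd hgate
  refine ⟨isClosed_Xset_zero_zero hcont hg hg01 hT, ?_⟩
  rw [Xset_one_one_eq]
  exact isClosed_Xset_zero_zero hcont (continuous_const.sub hg)
    (fun x => ⟨sub_nonneg.2 (hg01 x).2, sub_le_self _ (hg01 x).1⟩) fun x => (hT x).one_sub

/-- the subsets `X_{0,0}` and `X_{1,1}` are closed in `M`. -/
theorem stmt_2
    {M : Type*} [TopologicalSpace M] (ψ : ℝ → M → M)
    (hcont : Continuous fun q : ℝ × M => ψ q.1 q.2)
    (hzero : ∀ x, ψ 0 x = x)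
    (hadd : ∀ s t x, ψ (s + t) x = ψ s (ψ t x))
    (g : M → ℝ) (hg : Continuous g) (hg01 : ∀ x, g x ∈ Set.Icc (0 : ℝ) 1)
    (ℓ : ℝ) (hℓ : 0 < ℓ)
    (hgate : ∀ x, 0 < g x → g x < 1 → ∀ t : ℝ, ℓ < |t| →
      g (ψ t x) = 0 ∨ g (ψ t x) = 1) :
    IsClosed (Xset ψ g 0 0) ∧ IsClosed (Xset ψ g 1 1) :=
  stmt_2_general ψ hcont hadd g hg hg01 ℓ hgate
end

section
/- If M is connected and both X_{0,0} and X_{1,1} are nonempty, then at least one of X_{0,1} or X_{1,0} is nonempty. -/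
open Filter Topology

/-!
The function `t ↦ g (ψ t x)` is `{0, 1}`-valued outside a window of length `2ℓ` (around any time
where it lies in `(0, 1)`), hence constant on each of the two complementary rays. So if `X_{0,1}`
and `X_{1,0}` are empty, `g` equals a constant `c ∈ {0, 1}` along each orbit outside such a
window. Sampling at the times `0, 3ℓ, 6ℓ`, at most one of which lies in the window, the
continuous function `x ↦ g (ψ 0 x) + g (ψ (3ℓ) x) + g (ψ (6ℓ) x)` is then `≤ 1` on `X_{0,0}` and
`≥ 2` on `X_{1,1}`, so on a connected `M` it would have to take the forbidden value `3/2`.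
-/

open Set Function

lemma abs_add_add_sub_le_of_eqOn_off_Icc {f : ℝ → ℝ} (hf : ∀ t, f t ∈ Icc (0 : ℝ) 1)
    {c t₀ ℓ : ℝ} (hc : c ∈ Icc (0 : ℝ) 1) (hℓ : 0 < ℓ)
    (hl : EqOn f (const ℝ c) (Iio (t₀ - ℓ))) (hr : EqOn f (const ℝ c) (Ioi (t₀ + ℓ))) :
    |f 0 + f (3 * ℓ) + f (6 * ℓ) - 3 * c| ≤ 1 := by
  have hwindow : ∀ s, s ∈ Icc (t₀ - ℓ) (t₀ + ℓ) ∨ f s = c := by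
    intro s
    rcases lt_or_ge s (t₀ - ℓ) with hs | hs
    · exact Or.inr (hl hs)
    rcases le_or_gt s (t₀ + ℓ) with hs' | hs'
    · exact Or.inl ⟨hs, hs'⟩
    · exact Or.inr (hr hs')
  obtain ⟨hc0, hc1⟩ := hc
  obtain ⟨hf0, hf0'⟩ := hf 0
  obtain ⟨hf3, hf3'⟩ := hf (3 * ℓ)
  obtain ⟨hf6, hf6'⟩ := hf (6 * ℓ)
  rw [abs_le]
  rcases hwindow 0 with ⟨_, _⟩ | _ <;> rcases hwindow (3 * ℓ) with ⟨_, _⟩ | _ <;>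
    rcases hwindow (6 * ℓ) with ⟨_, _⟩ | _ <;> constructor <;> linarith

lemma exists_eqOn_Iio_and_eqOn_Ioi {β : Type*} [TopologicalSpace β] [T1Space β]
    {f : ℝ → β} (hf : Continuous f) {T : Set β} (hT : T.Finite) {a b : ℝ}
    (h : ∀ t ∉ Icc a b, f t ∈ T) :
    ∃ i ∈ T, ∃ j ∈ T, EqOn f (const ℝ i) (Iio a) ∧ EqOn f (const ℝ j) (Ioi b) := by
  have hTne : T.Nonempty := ⟨f (a - 1), h _ fun ht => by linarith [ht.1]⟩
  obtain ⟨i, hi, hl⟩ := isPreconnected_Iio.eqOn_const_of_mapsTo hT.isDiscrete hf.continuousOn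
    (fun t ht => h t fun ht' => (not_lt.2 ht'.1) ht) hTne
  obtain ⟨j, hj, hr⟩ := isPreconnected_Ioi.eqOn_const_of_mapsTo hT.isDiscrete hf.continuousOn
    (fun t ht => h t fun ht' => (not_lt.2 ht'.2) ht) hTne
  exact ⟨i, hi, j, hj, hl, hr⟩

section Flow

variable {M : Type*} {ψ : ℝ → M → M} {g : M → ℝ} {ℓ : ℝ}

lemma mem_Xset_of_eqOn {x : M} {a b i j : ℝ}
    (hl : EqOn (fun t => g (ψ t x)) (const ℝ i) (Iio a))
    (hr : EqOn (fun t => g (ψ t x)) (const ℝ j) (Ioi b)) :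
    x ∈ Xset ψ g i j :=
  ⟨tendsto_const_nhds.congr' (eventuallyEq_of_mem (Iio_mem_atBot a) hl.symm),
    tendsto_const_nhds.congr' (eventuallyEq_of_mem (Ioi_mem_atTop b) hr.symm)⟩

lemma exists_mem_zero_one_off_Icc (hadd : ∀ s t x, ψ (s + t) x = ψ s (ψ t x))
    (hg01 : ∀ x, g x ∈ Icc (0 : ℝ) 1)
    (hgate : ∀ x, 0 < g x → g x < 1 → ∀ t : ℝ, ℓ < |t| →
      g (ψ t x) = 0 ∨ g (ψ t x) = 1) (x : M) :
    ∃ t₀, ∀ t ∉ Icc (t₀ - ℓ) (t₀ + ℓ), g (ψ t x) ∈ ({0, 1} : Set ℝ) := by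
  by_cases hall : ∀ t, g (ψ t x) ∈ ({0, 1} : Set ℝ)
  · exact ⟨0, fun t _ => hall t⟩
  obtain ⟨t₀, ht₀⟩ := not_forall.1 hall
  simp only [mem_insert_iff, mem_singleton_iff, not_or] at ht₀
  refine ⟨t₀, fun t ht => ?_⟩
  have hfar : ℓ < |t - t₀| := by
    rw [mem_Icc, not_and_or, not_le, not_le] at ht
    rw [lt_abs]
    rcases ht with ht | ht
    · right; linarith
    · left; linarith
  have := hgate (ψ t₀ x) ((hg01 _).1.lt_of_ne' ht₀.1) ((hg01 _).2.lt_of_ne ht₀.2) _ hfar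
  rwa [← hadd, sub_add_cancel] at this

def flowSampleSum (ψ : ℝ → M → M) (g : M → ℝ) (ℓ : ℝ) (x : M) : ℝ :=
  g (ψ 0 x) + g (ψ (3 * ℓ) x) + g (ψ (6 * ℓ) x)

variable [TopologicalSpace M]

lemma continuous_flowSampleSum (hcont : Continuous fun q : ℝ × M => ψ q.1 q.2)
    (hg : Continuous g) : Continuous (flowSampleSum ψ g ℓ) := by
  have (t : ℝ) : Continuous fun x => g (ψ t x) := hg.comp (hcont.comp (.prodMk_right t))
  exact ((this 0).add (this _)).add (this _)

lemma mem_Xset_zero_zero_or_mem_Xset_one_one (hcont : Continuous fun q : ℝ × M => ψ q.1 q.2)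
    (hadd : ∀ s t x, ψ (s + t) x = ψ s (ψ t x))
    (hg : Continuous g) (hg01 : ∀ x, g x ∈ Icc (0 : ℝ) 1) (hℓ : 0 < ℓ)
    (hgate : ∀ x, 0 < g x → g x < 1 → ∀ t : ℝ, ℓ < |t| →
      g (ψ t x) = 0 ∨ g (ψ t x) = 1)
    (h01 : Xset ψ g 0 1 = ∅) (h10 : Xset ψ g 1 0 = ∅) (x : M) :
    (x ∈ Xset ψ g 0 0 ∧ flowSampleSum ψ g ℓ x ≤ 1) ∨
      (x ∈ Xset ψ g 1 1 ∧ 2 ≤ flowSampleSum ψ g ℓ x) := by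
  obtain ⟨t₀, ht₀⟩ := exists_mem_zero_one_off_Icc hadd hg01 hgate x
  have horbit : Continuous fun t => g (ψ t x) := hg.comp (hcont.comp (.prodMk_left x))
  obtain ⟨i, hi, j, hj, hl, hr⟩ := exists_eqOn_Iio_and_eqOn_Ioi horbit (toFinite _) ht₀
  have hx := mem_Xset_of_eqOn hl hr
  rcases hi with rfl | rfl <;> rcases hj with rfl | rfl
  · have := abs_add_add_sub_le_of_eqOn_off_Icc (fun t => hg01 _) (by norm_num) hℓ hl hr
    exact Or.inl ⟨hx, by rw [flowSampleSum]; linarith [(abs_le.1 this).2]⟩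
  · exact absurd hx (h01 ▸ notMem_empty x)
  · exact absurd hx (h10 ▸ notMem_empty x)
  · have := abs_add_add_sub_le_of_eqOn_off_Icc (fun t => hg01 _) (by norm_num) hℓ hl hr
    exact Or.inr ⟨hx, by rw [flowSampleSum]; linarith [(abs_le.1 this).1]⟩

end Flow

theorem stmt_3_general
    {M : Type*} [TopologicalSpace M] (ψ : ℝ → M → M)
    (hcont : Continuous fun q : ℝ × M => ψ q.1 q.2)
    (hadd : ∀ s t x, ψ (s + t) x = ψ s (ψ t x))
    (g : M → ℝ) (hg : Continuous g) (hg01 : ∀ x, g x ∈ Set.Icc (0 : ℝ) 1)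
    (ℓ : ℝ) (hℓ : 0 < ℓ)
    (hgate : ∀ x, 0 < g x → g x < 1 → ∀ t : ℝ, ℓ < |t| →
      g (ψ t x) = 0 ∨ g (ψ t x) = 1)
    (hconn : ConnectedSpace M)
    (h00 : (Xset ψ g 0 0).Nonempty) (h11 : (Xset ψ g 1 1).Nonempty) :
    (Xset ψ g 0 1).Nonempty ∨ (Xset ψ g 1 0).Nonempty := by
  by_contra! hempty
  have hclass := mem_Xset_zero_zero_or_mem_Xset_one_one hcont hadd hg hg01 hℓ hgate
    hempty.1 hempty.2
  obtain ⟨a, ha⟩ := h00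
  obtain ⟨b, hb⟩ := h11
  have hHa : flowSampleSum ψ g ℓ a ≤ 1 := by
    rcases hclass a with ⟨-, h⟩ | ⟨ha', -⟩
    · exact h
    · exact absurd (tendsto_nhds_unique ha.2 ha'.2) zero_ne_one
  have hHb : 2 ≤ flowSampleSum ψ g ℓ b := by
    rcases hclass b with ⟨hb', -⟩ | ⟨-, h⟩
    · exact absurd (tendsto_nhds_unique hb'.2 hb.2) zero_ne_one
    · exact h
  obtain ⟨x, hx⟩ := intermediate_value_univ a b (continuous_flowSampleSum (ℓ := ℓ) hcont hg)
    (show (3 / 2 : ℝ) ∈ Icc _ _ from ⟨by linarith, by linarith⟩)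
  rcases hclass x with ⟨-, h⟩ | ⟨-, h⟩ <;> linarith

/-- if `M` is connected and both `X_{0,0}` and `X_{1,1}` are
nonempty, then at least one of `X_{0,1}` or `X_{1,0}` is nonempty. -/
theorem stmt_3
    {M : Type*} [TopologicalSpace M] (ψ : ℝ → M → M)
    (hcont : Continuous fun q : ℝ × M => ψ q.1 q.2)
    (hzero : ∀ x, ψ 0 x = x)
    (hadd : ∀ s t x, ψ (s + t) x = ψ s (ψ t x))
    (g : M → ℝ) (hg : Continuous g) (hg01 : ∀ x, g x ∈ Set.Icc (0 : ℝ) 1)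
    (ℓ : ℝ) (hℓ : 0 < ℓ)
    (hgate : ∀ x, 0 < g x → g x < 1 → ∀ t : ℝ, ℓ < |t| →
      g (ψ t x) = 0 ∨ g (ψ t x) = 1)
    (hconn : ConnectedSpace M)
    (h00 : (Xset ψ g 0 0).Nonempty) (h11 : (Xset ψ g 1 1).Nonempty) :
    (Xset ψ g 0 1).Nonempty ∨ (Xset ψ g 1 0).Nonempty :=
  stmt_3_general ψ hcont hadd g hg hg01 ℓ hℓ hgate hconn h00 h11
end

section
/- The subsets X_{0,1}, X_{1,0}, U_{0,0}, and U_{1,1} are open in M. -/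
/-! If the orbit of `x` passes through `0 < g < 1` at time `t₀`, then outside `[t₀ - ℓ, t₀ + ℓ]`
it only takes the values `0` and `1`, so by connectedness it is constant on each of the two rays.
The limits at `∓∞` are therefore the values at the times `t₀ ∓ (ℓ + 1)`, which depend
continuously on `x`; as `{0, 1}` is discrete, prescribing them is an open condition. Each of the
four sets consists of points whose orbit does pass through `0 < g < 1`: by the intermediate value
theorem, using `0 ≤ g ≤ 1` for `U_{0,0}` and `U_{1,1}`. -/

open Filter Topology

open Set

section ConstantOnRay

variable {α β : Type*} [ConditionallyCompleteLinearOrder α] [TopologicalSpace α] [OrderTopology α]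
  [DenselyOrdered α] [TopologicalSpace β] {T : Set β} {f : α → β} {a : α}

theorem tendsto_atTop_of_mapsTo_Ici (hT : IsDiscrete T) (hf : ContinuousOn f (Ici a))
    (hmaps : MapsTo f (Ici a) T) : Tendsto f atTop (𝓝 (f a)) :=
  tendsto_const_nhds.congr' <| (eventually_ge_atTop a).mono fun _ ht =>
    isPreconnected_Ici.constant_of_mapsTo hT hf hmaps self_mem_Ici ht

theorem tendsto_atBot_of_mapsTo_Iic (hT : IsDiscrete T) (hf : ContinuousOn f (Iic a))
    (hmaps : MapsTo f (Iic a) T) : Tendsto f atBot (𝓝 (f a)) :=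
  tendsto_const_nhds.congr' <| (eventually_le_atBot a).mono fun _ ht =>
    isPreconnected_Iic.constant_of_mapsTo hT hf hmaps self_mem_Iic ht

end ConstantOnRay

theorem eq_iff_ne_one_sub {a b : ℝ} (ha : a ∈ ({0, 1} : Set ℝ)) (hb : b ∈ ({0, 1} : Set ℝ)) :
    a = b ↔ a ≠ 1 - b := by
  rcases ha with rfl | rfl <;> rcases hb with rfl | rfl <;> norm_num

def transitSet {M : Type*} (ψ : ℝ → M → M) (g : M → ℝ) : Set M :=
  {x | ∃ t, g (ψ t x) ∈ Ioo 0 1}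

section Flow

variable {M : Type*} {ψ : ℝ → M → M} {g : M → ℝ} {ℓ : ℝ}

theorem mapsTo_orbit_Ici (hadd : ∀ s t x, ψ (s + t) x = ψ s (ψ t x))
    (hgate : ∀ x, 0 < g x → g x < 1 → ∀ t : ℝ, ℓ < |t| → g (ψ t x) = 0 ∨ g (ψ t x) = 1)
    {x : M} {t₀ : ℝ} (h₀ : g (ψ t₀ x) ∈ Ioo 0 1) :
    MapsTo (fun t => g (ψ t x)) (Ici (t₀ + (ℓ + 1))) {0, 1} := by
  intro t (ht : t₀ + (ℓ + 1) ≤ t)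
  have hgap : ℓ < |t - t₀| := by linarith [le_abs_self (t - t₀)]
  simpa only [mem_insert_iff, mem_singleton_iff, ← hadd, sub_add_cancel]
    using hgate _ h₀.1 h₀.2 _ hgap

theorem mapsTo_orbit_Iic (hadd : ∀ s t x, ψ (s + t) x = ψ s (ψ t x))
    (hgate : ∀ x, 0 < g x → g x < 1 → ∀ t : ℝ, ℓ < |t| → g (ψ t x) = 0 ∨ g (ψ t x) = 1)
    {x : M} {t₀ : ℝ} (h₀ : g (ψ t₀ x) ∈ Ioo 0 1) :
    MapsTo (fun t => g (ψ t x)) (Iic (t₀ - (ℓ + 1))) {0, 1} := by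
  intro t (ht : t ≤ t₀ - (ℓ + 1))
  have hgap : ℓ < |t - t₀| := by linarith [neg_abs_le (t - t₀)]
  simpa only [mem_insert_iff, mem_singleton_iff, ← hadd, sub_add_cancel]
    using hgate _ h₀.1 h₀.2 _ hgap

variable [TopologicalSpace M]

theorem continuous_orbit (hcont : Continuous fun q : ℝ × M => ψ q.1 q.2) (hg : Continuous g)
    (x : M) : Continuous fun t => g (ψ t x) := by
  fun_prop

theorem continuous_at_time (hcont : Continuous fun q : ℝ × M => ψ q.1 q.2) (hg : Continuous g)
    (t : ℝ) : Continuous fun x => g (ψ t x) := by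
  fun_prop

theorem mem_transitSet_of_le_of_ge (hcont : Continuous fun q : ℝ × M => ψ q.1 q.2)
    (hg : Continuous g) {x : M} {s s' : ℝ} (hs : g (ψ s x) ≤ 1 / 2) (hs' : 1 / 2 ≤ g (ψ s' x)) :
    x ∈ transitSet ψ g := by
  obtain ⟨t, ht⟩ := intermediate_value_univ s s' (continuous_orbit hcont hg x) ⟨hs, hs'⟩
  exact ⟨t, by norm_num [ht]⟩

theorem mem_Xset_iff_of_mem_Ioo (hcont : Continuous fun q : ℝ × M => ψ q.1 q.2)
    (hadd : ∀ s t x, ψ (s + t) x = ψ s (ψ t x)) (hg : Continuous g)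
    (hgate : ∀ x, 0 < g x → g x < 1 → ∀ t : ℝ, ℓ < |t| → g (ψ t x) = 0 ∨ g (ψ t x) = 1)
    {x : M} {t₀ : ℝ} (h₀ : g (ψ t₀ x) ∈ Ioo 0 1) {i j : ℝ} :
    x ∈ Xset ψ g i j ↔ g (ψ (t₀ - (ℓ + 1)) x) = i ∧ g (ψ (t₀ + (ℓ + 1)) x) = j := by
  have hcont_orbit := continuous_orbit hcont hg x
  have hbot := tendsto_atBot_of_mapsTo_Iic ⟨inferInstance⟩ hcont_orbit.continuousOn
    (mapsTo_orbit_Iic hadd hgate h₀)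
  have htop := tendsto_atTop_of_mapsTo_Ici ⟨inferInstance⟩ hcont_orbit.continuousOn
    (mapsTo_orbit_Ici hadd hgate h₀)
  constructor
  · rintro ⟨hi, hj⟩
    exact ⟨tendsto_nhds_unique hbot hi, tendsto_nhds_unique htop hj⟩
  · rintro ⟨rfl, rfl⟩
    exact ⟨hbot, htop⟩

theorem isOpen_Xset_inter_transitSet (hcont : Continuous fun q : ℝ × M => ψ q.1 q.2)
    (hadd : ∀ s t x, ψ (s + t) x = ψ s (ψ t x)) (hg : Continuous g)
    (hgate : ∀ x, 0 < g x → g x < 1 → ∀ t : ℝ, ℓ < |t| → g (ψ t x) = 0 ∨ g (ψ t x) = 1)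
    {i j : ℝ} (hi : i ∈ ({0, 1} : Set ℝ)) (hj : j ∈ ({0, 1} : Set ℝ)) :
    IsOpen (Xset ψ g i j ∩ transitSet ψ g) := by
  refine isOpen_iff_forall_mem_open.2 fun x ⟨hx, t₀, h₀⟩ => ?_
  have hcont_at := continuous_at_time hcont hg
  -- on the open set where `g ∘ ψ t₀` lies in `(0, 1)`, both limits are `{0, 1}`-valued
  -- continuous functions of the point, so each is pinned down by avoiding one value
  refine ⟨{y | g (ψ t₀ y) ∈ Ioo 0 1} ∩ {y | g (ψ (t₀ - (ℓ + 1)) y) ≠ 1 - i} ∩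
      {y | g (ψ (t₀ + (ℓ + 1)) y) ≠ 1 - j}, ?_, ?_, ?_⟩
  · rintro y ⟨⟨hy, hyi⟩, hyj⟩
    refine ⟨(mem_Xset_iff_of_mem_Ioo hcont hadd hg hgate hy).2 ⟨?_, ?_⟩, t₀, hy⟩
    · exact (eq_iff_ne_one_sub (mapsTo_orbit_Iic hadd hgate hy self_mem_Iic) hi).2 hyi
    · exact (eq_iff_ne_one_sub (mapsTo_orbit_Ici hadd hgate hy self_mem_Ici) hj).2 hyj
  · exact ((isOpen_Ioo.preimage (hcont_at t₀)).inter
      (isOpen_ne_fun (hcont_at _) continuous_const)).inter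
      (isOpen_ne_fun (hcont_at _) continuous_const)
  · obtain ⟨hxi, hxj⟩ := (mem_Xset_iff_of_mem_Ioo hcont hadd hg hgate h₀).1 hx
    exact ⟨⟨h₀, (eq_iff_ne_one_sub (mapsTo_orbit_Iic hadd hgate h₀ self_mem_Iic) hi).1 hxi⟩,
      (eq_iff_ne_one_sub (mapsTo_orbit_Ici hadd hgate h₀ self_mem_Ici) hj).1 hxj⟩

theorem Xset_zero_one_subset_transitSet (hcont : Continuous fun q : ℝ × M => ψ q.1 q.2)
    (hg : Continuous g) : Xset ψ g 0 1 ⊆ transitSet ψ g := by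
  rintro x ⟨hbot, htop⟩
  obtain ⟨s, hs⟩ := (hbot.eventually_lt_const (by norm_num : (0 : ℝ) < 1 / 2)).exists
  obtain ⟨s', hs'⟩ := (htop.eventually_const_lt (by norm_num : (1 / 2 : ℝ) < 1)).exists
  exact mem_transitSet_of_le_of_ge hcont hg hs.le hs'.le

theorem Xset_one_zero_subset_transitSet (hcont : Continuous fun q : ℝ × M => ψ q.1 q.2)
    (hg : Continuous g) : Xset ψ g 1 0 ⊆ transitSet ψ g := by
  rintro x ⟨hbot, htop⟩
  obtain ⟨s, hs⟩ := (htop.eventually_lt_const (by norm_num : (0 : ℝ) < 1 / 2)).exists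
  obtain ⟨s', hs'⟩ := (hbot.eventually_const_lt (by norm_num : (1 / 2 : ℝ) < 1)).exists
  exact mem_transitSet_of_le_of_ge hcont hg hs.le hs'.le

theorem U00_eq_Xset_inter_transitSet (hcont : Continuous fun q : ℝ × M => ψ q.1 q.2)
    (hg : Continuous g) (hg01 : ∀ x, g x ∈ Icc (0 : ℝ) 1) :
    U00 ψ g = Xset ψ g 0 0 ∩ transitSet ψ g := by
  ext x
  refine ⟨fun ⟨hx, t, ht⟩ => ⟨hx, ?_⟩, fun ⟨hx, t, ht⟩ => ⟨hx, t, ht.1.ne'⟩⟩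
  have hpos : 0 < g (ψ t x) := (hg01 _).1.lt_of_ne' ht
  rcases lt_or_ge (g (ψ t x)) (1 / 2) with hlt | hge
  · exact ⟨t, hpos, by linarith⟩
  · obtain ⟨s, hs⟩ := (hx.2.eventually_lt_const (by norm_num : (0 : ℝ) < 1 / 2)).exists
    exact mem_transitSet_of_le_of_ge hcont hg hs.le hge

theorem U11_eq_Xset_inter_transitSet (hcont : Continuous fun q : ℝ × M => ψ q.1 q.2)
    (hg : Continuous g) (hg01 : ∀ x, g x ∈ Icc (0 : ℝ) 1) :
    U11 ψ g = Xset ψ g 1 1 ∩ transitSet ψ g := by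
  ext x
  refine ⟨fun ⟨hx, t, ht⟩ => ⟨hx, ?_⟩, fun ⟨hx, t, ht⟩ => ⟨hx, t, ht.2.ne⟩⟩
  have hlt : g (ψ t x) < 1 := (hg01 _).2.lt_of_ne ht
  rcases lt_or_ge (1 / 2) (g (ψ t x)) with hgt | hle
  · exact ⟨t, by linarith, hlt⟩
  · obtain ⟨s, hs⟩ := (hx.2.eventually_const_lt (by norm_num : (1 / 2 : ℝ) < 1)).exists
    exact mem_transitSet_of_le_of_ge hcont hg hle hs.le

end Flow

theorem stmt_4_general
    {M : Type*} [TopologicalSpace M] (ψ : ℝ → M → M)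
    (hcont : Continuous fun q : ℝ × M => ψ q.1 q.2)
    (hadd : ∀ s t x, ψ (s + t) x = ψ s (ψ t x))
    (g : M → ℝ) (hg : Continuous g) (hg01 : ∀ x, g x ∈ Set.Icc (0 : ℝ) 1)
    (ℓ : ℝ)
    (hgate : ∀ x, 0 < g x → g x < 1 → ∀ t : ℝ, ℓ < |t| →
      g (ψ t x) = 0 ∨ g (ψ t x) = 1) :
    IsOpen (Xset ψ g 0 1) ∧ IsOpen (Xset ψ g 1 0) ∧
    IsOpen (U00 ψ g) ∧ IsOpen (U11 ψ g) := by
  have hopen {i j : ℝ} (hi : i = 0 ∨ i = 1) (hj : j = 0 ∨ j = 1) :=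
    isOpen_Xset_inter_transitSet hcont hadd hg hgate hi hj
  refine ⟨?_, ?_, ?_, ?_⟩
  · rw [← inter_eq_left.2 (Xset_zero_one_subset_transitSet hcont hg)]
    exact hopen (by norm_num) (by norm_num)
  · rw [← inter_eq_left.2 (Xset_one_zero_subset_transitSet hcont hg)]
    exact hopen (by norm_num) (by norm_num)
  · rw [U00_eq_Xset_inter_transitSet hcont hg hg01]
    exact hopen (by norm_num) (by norm_num)
  · rw [U11_eq_Xset_inter_transitSet hcont hg hg01]
    exact hopen (by norm_num) (by norm_num)

/-- the subsets `X_{0,1}`, `X_{1,0}`, `U_{0,0}`, and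
`U_{1,1}` are open in `M`. -/
theorem stmt_4
    {M : Type*} [TopologicalSpace M] (ψ : ℝ → M → M)
    (hcont : Continuous fun q : ℝ × M => ψ q.1 q.2)
    (hzero : ∀ x, ψ 0 x = x)
    (hadd : ∀ s t x, ψ (s + t) x = ψ s (ψ t x))
    (g : M → ℝ) (hg : Continuous g) (hg01 : ∀ x, g x ∈ Set.Icc (0 : ℝ) 1)
    (ℓ : ℝ) (hℓ : 0 < ℓ)
    (hgate : ∀ x, 0 < g x → g x < 1 → ∀ t : ℝ, ℓ < |t| →
      g (ψ t x) = 0 ∨ g (ψ t x) = 1) :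
    IsOpen (Xset ψ g 0 1) ∧ IsOpen (Xset ψ g 1 0) ∧
    IsOpen (U00 ψ g) ∧ IsOpen (U11 ψ g) :=
  stmt_4_general ψ hcont hadd g hg hg01 ℓ hgate
end

section
/- Assume ℓ < 1. Then for every x ∈ X_{0,1} and every integer n ≥ 1, at least one of g(ψ_{−n}(x)) = 0 or g(ψ_n(x)) = 1 holds; consequently 0 ≤ g(ψ_n(x)) − g(ψ_{−n}(x)) ≤ 1. -/
open Filter Topology

/-!
Follow `f t = g (ψ_t x)` from `0` to `1` and pick a time `s` with `f s = 1/2`. The gate condition at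
`ψ_s x` forces `f` into `{0, 1}` off `[s - ℓ, s + ℓ]`; on each of the two half-lines `f` is then
constant by connectedness, equal to its limit, so `f = 0` before `s - ℓ` and `f = 1` after `s + ℓ`.
Since `2ℓ < 2 ≤ 2n`, the interval `[-n, n]` cannot fit inside `[s - ℓ, s + ℓ]`.
-/

theorem IsPreconnected.eq_of_tendsto {α β : Type*} [TopologicalSpace α] [TopologicalSpace β]
    [T2Space β] {S : Set α} (hS : IsPreconnected S) {T : Set β} (hT : IsDiscrete T) {f : α → β}
    (hf : ContinuousOn f S) (hfT : Set.MapsTo f S T) {l : Filter α} [l.NeBot] (hSl : S ∈ l)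
    {b : β} (hlim : Tendsto f l (𝓝 b)) {x : α} (hx : x ∈ S) : f x = b := by
  have hconst : f =ᶠ[l] fun _ => f x :=
    Filter.mem_of_superset hSl fun _ hy => hS.constant_of_mapsTo hT hf hfT hy hx
  exact tendsto_nhds_unique (tendsto_const_nhds.congr' hconst.symm) hlim

theorem Real.exists_eq_of_tendsto_atBot_atTop {f : ℝ → ℝ} (hf : Continuous f) {a b c : ℝ}
    (hbot : Tendsto f atBot (𝓝 a)) (htop : Tendsto f atTop (𝓝 b)) (hc : c ∈ Set.Ioo a b) :
    ∃ s, f s = c := by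
  obtain ⟨t₀, ht₀⟩ := (hbot.eventually_lt_const hc.1).exists
  obtain ⟨t₁, ht₁⟩ := (htop.eventually_const_lt hc.2).exists
  exact intermediate_value_univ t₀ t₁ hf ⟨ht₀.le, ht₁.le⟩

theorem exists_time_forall_lt_eq_zero_and_forall_gt_eq_one {M : Type*} [TopologicalSpace M]
    {ψ : ℝ → M → M} (hcont : Continuous fun q : ℝ × M => ψ q.1 q.2)
    (hadd : ∀ s t x, ψ (s + t) x = ψ s (ψ t x)) {g : M → ℝ} (hg : Continuous g) {ℓ : ℝ}
    (hgate : ∀ x, 0 < g x → g x < 1 → ∀ t : ℝ, ℓ < |t| → g (ψ t x) = 0 ∨ g (ψ t x) = 1)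
    {x : M} (hx : x ∈ Xset ψ g 0 1) :
    ∃ s, (∀ t < s - ℓ, g (ψ t x) = 0) ∧ (∀ t > s + ℓ, g (ψ t x) = 1) := by
  obtain ⟨hbot, htop⟩ := hx
  have hf : Continuous fun t => g (ψ t x) := hg.comp (hcont.comp (Continuous.prodMk_left x))
  obtain ⟨s, hs⟩ := Real.exists_eq_of_tendsto_atBot_atTop hf hbot htop (c := 1 / 2) (by norm_num)
  have hmaps : ∀ t, ℓ < |t - s| → g (ψ t x) ∈ ({0, 1} : Set ℝ) := fun t ht => by
    have h := hgate (ψ s x) (by rw [hs]; norm_num) (by rw [hs]; norm_num) (t - s) ht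
    rwa [← hadd, sub_add_cancel] at h
  have hdisc : IsDiscrete ({0, 1} : Set ℝ) := (Set.toFinite _).isDiscrete
  refine ⟨s, fun t ht => ?_, fun t ht => ?_⟩
  · refine isPreconnected_Iio.eq_of_tendsto hdisc hf.continuousOn (fun u hu => hmaps u ?_)
      (Iio_mem_atBot _) hbot ht
    rw [abs_sub_comm]
    exact (lt_sub_comm.mp hu).trans_le (le_abs_self _)
  · refine isPreconnected_Ioi.eq_of_tendsto hdisc hf.continuousOn (fun u hu => hmaps u ?_)
      (Ioi_mem_atTop _) htop ht
    exact (lt_sub_iff_add_lt'.mpr hu).trans_le (le_abs_self _)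

theorem stmt_6_general
    {M : Type*} [TopologicalSpace M] (ψ : ℝ → M → M)
    (hcont : Continuous fun q : ℝ × M => ψ q.1 q.2)
    (hadd : ∀ s t x, ψ (s + t) x = ψ s (ψ t x))
    (g : M → ℝ) (hg : Continuous g) (hg01 : ∀ x, g x ∈ Set.Icc (0 : ℝ) 1)
    (ℓ : ℝ)
    (hgate : ∀ x, 0 < g x → g x < 1 → ∀ t : ℝ, ℓ < |t| →
      g (ψ t x) = 0 ∨ g (ψ t x) = 1)
    (hℓ1 : ℓ < 1)
    (x : M) (hx : x ∈ Xset ψ g 0 1) (n : ℕ) (hn : 1 ≤ n) :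
    (g (ψ (-(n : ℝ)) x) = 0 ∨ g (ψ (n : ℝ) x) = 1) ∧
    0 ≤ g (ψ (n : ℝ) x) - g (ψ (-(n : ℝ)) x) ∧
    g (ψ (n : ℝ) x) - g (ψ (-(n : ℝ)) x) ≤ 1 := by
  obtain ⟨s, hbefore, hafter⟩ :=
    exists_time_forall_lt_eq_zero_and_forall_gt_eq_one hcont hadd hg hgate hx
  have hn' : (1 : ℝ) ≤ n := by exact_mod_cast hn
  have hdich : g (ψ (-(n : ℝ)) x) = 0 ∨ g (ψ (n : ℝ) x) = 1 := by
    by_cases h : s + ℓ < n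
    · exact Or.inr (hafter _ h)
    · exact Or.inl (hbefore _ (by linarith))
  obtain ⟨ha₀, ha₁⟩ := hg01 (ψ (-(n : ℝ)) x)
  obtain ⟨hb₀, hb₁⟩ := hg01 (ψ (n : ℝ) x)
  refine ⟨hdich, ?_, by linarith⟩
  rcases hdich with h | h <;> linarith

/-- assume `ℓ < 1`.  For every `x ∈ X_{0,1}` and every integer
`n ≥ 1`, at least one of `g(ψ_{−n}(x)) = 0` or `g(ψ_n(x)) = 1` holds;
consequently `0 ≤ g(ψ_n(x)) − g(ψ_{−n}(x)) ≤ 1`. -/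
theorem stmt_6
    {M : Type*} [TopologicalSpace M] (ψ : ℝ → M → M)
    (hcont : Continuous fun q : ℝ × M => ψ q.1 q.2)
    (hzero : ∀ x, ψ 0 x = x)
    (hadd : ∀ s t x, ψ (s + t) x = ψ s (ψ t x))
    (g : M → ℝ) (hg : Continuous g) (hg01 : ∀ x, g x ∈ Set.Icc (0 : ℝ) 1)
    (ℓ : ℝ) (hℓ : 0 < ℓ)
    (hgate : ∀ x, 0 < g x → g x < 1 → ∀ t : ℝ, ℓ < |t| →
      g (ψ t x) = 0 ∨ g (ψ t x) = 1)
    (hℓ1 : ℓ < 1)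
    (x : M) (hx : x ∈ Xset ψ g 0 1) (n : ℕ) (hn : 1 ≤ n) :
    (g (ψ (-(n : ℝ)) x) = 0 ∨ g (ψ (n : ℝ) x) = 1) ∧
    0 ≤ g (ψ (n : ℝ) x) - g (ψ (-(n : ℝ)) x) ∧
    g (ψ (n : ℝ) x) - g (ψ (-(n : ℝ)) x) ≤ 1 :=
  stmt_6_general ψ hcont hadd g hg hg01 ℓ hgate hℓ1 x hx n hn
end

section
/- Assume ℓ < 1. Then for every x ∈ X_{0,1} there is an integer N such that for all integers n ≥ N, both g(ψ_{−n}(x)) = 0 and g(ψ_n(x)) = 1 hold; in particular g(ψ_n(x)) − g(ψ_{−n}(x)) = 1 for all n ≥ N. -/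
/-!
The gate condition says that once an orbit passes through a point with `0 < g < 1`, it only takes
the values `0` and `1` outside a window of length `2ℓ` around that time; an orbit that never passes
through such a point takes only the values `0` and `1` anyway. So far out in either direction
`t ↦ g (ψ t x)` is `{0, 1}`-valued, and its limits `0` at `-∞` and `1` at `+∞` are attained exactly.
-/

open Filter Topology

theorem Filter.Tendsto.eventually_eq_of_eventually_mem_finite {α X : Type*} [TopologicalSpace X]
    [T1Space X] {l : Filter α} {f : α → X} {a : X} {s : Set X} (hs : s.Finite)
    (hf : Tendsto f l (𝓝 a)) (hmem : ∀ᶠ t in l, f t ∈ s) : ∀ᶠ t in l, f t = a := by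
  have hnhds : (s \ {a})ᶜ ∈ 𝓝 a :=
    hs.sdiff.isClosed.isOpen_compl.mem_nhds fun h => h.2 rfl
  filter_upwards [hf hnhds, hmem] with t hout hin
  by_contra hne
  exact hout ⟨hin, hne⟩

theorem eventually_cocompact_zero_or_one_of_gate {M : Type*} (ψ : ℝ → M → M)
    (hadd : ∀ s t x, ψ (s + t) x = ψ s (ψ t x))
    (g : M → ℝ) (hg01 : ∀ x, g x ∈ Set.Icc (0 : ℝ) 1) (ℓ : ℝ)
    (hgate : ∀ x, 0 < g x → g x < 1 → ∀ t : ℝ, ℓ < |t| →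
      g (ψ t x) = 0 ∨ g (ψ t x) = 1)
    (x : M) : ∀ᶠ t in cocompact ℝ, g (ψ t x) = 0 ∨ g (ψ t x) = 1 := by
  by_cases hmid : ∃ s, 0 < g (ψ s x) ∧ g (ψ s x) < 1
  · obtain ⟨s, hpos, hlt⟩ := hmid
    filter_upwards [(isCompact_closedBall s ℓ).compl_mem_cocompact] with t ht
    have hflow : ψ t x = ψ (t - s) (ψ s x) := by rw [← hadd, sub_add_cancel]
    rw [hflow]
    exact hgate _ hpos hlt _ (by simpa [Real.dist_eq] using ht)
  · push Not at hmid
    refine Eventually.of_forall fun t => ?_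
    obtain ⟨h0, h1⟩ := hg01 (ψ t x)
    rcases h0.lt_or_eq with hpos | hzero
    · exact Or.inr (le_antisymm h1 (hmid t hpos))
    · exact Or.inl hzero.symm

theorem stmt_7_general
    {M : Type*} (ψ : ℝ → M → M)
    (hadd : ∀ s t x, ψ (s + t) x = ψ s (ψ t x))
    (g : M → ℝ) (hg01 : ∀ x, g x ∈ Set.Icc (0 : ℝ) 1)
    (ℓ : ℝ)
    (hgate : ∀ x, 0 < g x → g x < 1 → ∀ t : ℝ, ℓ < |t| →
      g (ψ t x) = 0 ∨ g (ψ t x) = 1)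
    (x : M) (hx : x ∈ Xset ψ g 0 1) :
    ∃ N : ℕ, ∀ n : ℕ, N ≤ n →
      g (ψ (-(n : ℝ)) x) = 0 ∧ g (ψ (n : ℝ) x) = 1 ∧
      g (ψ (n : ℝ) x) - g (ψ (-(n : ℝ)) x) = 1 := by
  obtain ⟨hbot, htop⟩ := hx
  have hfar := eventually_cocompact_zero_or_one_of_gate ψ hadd g hg01 ℓ hgate x
  have hpair : ({0, 1} : Set ℝ).Finite := by simp
  have h0 : ∀ᶠ t in atBot, g (ψ t x) = 0 :=
    hbot.eventually_eq_of_eventually_mem_finite hpair (atBot_le_cocompact hfar)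
  have h1 : ∀ᶠ t in atTop, g (ψ t x) = 1 :=
    htop.eventually_eq_of_eventually_mem_finite hpair (atTop_le_cocompact hfar)
  have hnat : ∀ᶠ n : ℕ in atTop, g (ψ (-(n : ℝ)) x) = 0 ∧ g (ψ (n : ℝ) x) = 1 :=
    (tendsto_neg_atTop_atBot.comp tendsto_natCast_atTop_atTop |>.eventually h0).and
      (tendsto_natCast_atTop_atTop.eventually h1)
  obtain ⟨N, hN⟩ := eventually_atTop.mp hnat
  refine ⟨N, fun n hn => ?_⟩
  obtain ⟨hneg, hpos⟩ := hN n hn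
  exact ⟨hneg, hpos, by rw [hpos, hneg]; norm_num⟩

/-- assume `ℓ < 1`.  For every `x ∈ X_{0,1}` there is an integer
`N` such that for all integers `n ≥ N` both `g(ψ_{−n}(x)) = 0` and
`g(ψ_n(x)) = 1` hold; in particular `g(ψ_n(x)) − g(ψ_{−n}(x)) = 1` for all
`n ≥ N`. -/
theorem stmt_7
    {M : Type*} [TopologicalSpace M] (ψ : ℝ → M → M)
    (hcont : Continuous fun q : ℝ × M => ψ q.1 q.2)
    (hzero : ∀ x, ψ 0 x = x)
    (hadd : ∀ s t x, ψ (s + t) x = ψ s (ψ t x))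
    (g : M → ℝ) (hg : Continuous g) (hg01 : ∀ x, g x ∈ Set.Icc (0 : ℝ) 1)
    (ℓ : ℝ) (hℓ : 0 < ℓ)
    (hgate : ∀ x, 0 < g x → g x < 1 → ∀ t : ℝ, ℓ < |t| →
      g (ψ t x) = 0 ∨ g (ψ t x) = 1)
    (hℓ1 : ℓ < 1)
    (x : M) (hx : x ∈ Xset ψ g 0 1) :
    ∃ N : ℕ, ∀ n : ℕ, N ≤ n →
      g (ψ (-(n : ℝ)) x) = 0 ∧ g (ψ (n : ℝ) x) = 1 ∧
      g (ψ (n : ℝ) x) - g (ψ (-(n : ℝ)) x) = 1 :=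
  stmt_7_general ψ hadd g hg01 ℓ hgate x hx
end

section
/- Assume ℓ < 1. Then for every x ∈ X_{0,1}, lim_{t→−∞} p(ψ_t(x)) = 0 and lim_{t→+∞} p(ψ_t(x)) = 1. -/
open Filter Topology

/-!
Along the orbit of `x`, `g_n(ψ_t x)` is the mean of `g ∘ ψ · x` over the window `[t - n, t + n]`,
so for each fixed `n` it inherits the limit of `g` along the orbit (dominated convergence on a
fixed interval). Since `0 ≤ g ≤ 1`, the series `p = Σ 2^{-n} g_n` is dominated by `Σ 2^{-n} = 1`,
and Tannery's theorem passes these limits through the sum.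
-/

open MeasureTheory

section FlowAverages

variable {M : Type*} (ψ : ℝ → M → M) (g : M → ℝ)

lemma abs_gAvg_le_one (hg : ∀ y, |g y| ≤ 1) (n : ℕ) (y : M) : |gAvg ψ g n y| ≤ 1 := by
  rcases Nat.eq_zero_or_pos n with rfl | hn
  · simp [gAvg]
  have hn' : (0 : ℝ) < n := Nat.cast_pos.mpr hn
  have hint : ‖∫ t in (-(n : ℝ))..n, g (ψ t y)‖ ≤ 1 * |(n : ℝ) - -n| :=
    intervalIntegral.norm_integral_le_of_norm_le_const fun t _ => hg (ψ t y)
  rw [one_mul, abs_of_pos (by linarith), Real.norm_eq_abs] at hint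
  rw [gAvg, abs_mul, abs_of_pos (by positivity)]
  calc 1 / (2 * (n : ℝ)) * |∫ t in (-(n : ℝ))..n, g (ψ t y)|
      ≤ 1 / (2 * n) * (n - -n) := by gcongr
    _ = 1 := by field_simp; ring

lemma gAvg_apply_flow (hadd : ∀ s t x, ψ (s + t) x = ψ s (ψ t x)) (n : ℕ) (x : M) (t : ℝ) :
    gAvg ψ g n (ψ t x) = 1 / (2 * (n : ℝ)) * ∫ s in (-(n : ℝ))..n, g (ψ (s + t) x) := by
  simp only [gAvg, hadd]

lemma tendsto_gAvg_flow [TopologicalSpace M] {l : Filter ℝ} [l.IsCountablyGenerated]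
    (hcont : Continuous fun q : ℝ × M => ψ q.1 q.2)
    (hadd : ∀ s t x, ψ (s + t) x = ψ s (ψ t x))
    (hg : Continuous g) (hg_bdd : ∀ y, |g y| ≤ 1) (x : M) {c : ℝ}
    (hlim : ∀ s, Tendsto (fun t => g (ψ (s + t) x)) l (𝓝 c)) {n : ℕ} (hn : n ≠ 0) :
    Tendsto (fun t => gAvg ψ g n (ψ t x)) l (𝓝 c) := by
  have hcont_orbit : ∀ t, Continuous fun s => g (ψ (s + t) x) := fun t =>
    hg.comp (hcont.comp ((continuous_id.add continuous_const).prodMk continuous_const))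
  have hint : Tendsto (fun t => ∫ s in (-(n : ℝ))..n, g (ψ (s + t) x)) l
      (𝓝 (∫ _ in (-(n : ℝ))..n, c)) :=
    intervalIntegral.tendsto_integral_filter_of_dominated_convergence (fun _ => 1)
      (Eventually.of_forall fun t => (hcont_orbit t).aestronglyMeasurable)
      (Eventually.of_forall fun _ => ae_of_all _ fun _ _ => hg_bdd _)
      intervalIntegrable_const (ae_of_all _ fun s _ => hlim s)
  have hn' : (n : ℝ) ≠ 0 := Nat.cast_ne_zero.mpr hn
  have hmean : 1 / (2 * (n : ℝ)) * ∫ _ in (-(n : ℝ))..n, c = c := by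
    rw [intervalIntegral.integral_const, smul_eq_mul]
    field_simp
    ring
  simp only [gAvg_apply_flow ψ g hadd]
  simpa only [hmean] using hint.const_mul (1 / (2 * (n : ℝ)))

lemma tendsto_pFun {α : Type*} {l : Filter α} (hg_bdd : ∀ y, |g y| ≤ 1) (u : α → M) {c : ℝ}
    (hlim : ∀ n : ℕ, Tendsto (fun a => gAvg ψ g (n + 1) (u a)) l (𝓝 c)) :
    Tendsto (fun a => pFun ψ g (u a)) l (𝓝 c) := by
  have hweights : HasSum (fun n : ℕ => (1 / 2 : ℝ) ^ (n + 1)) 1 := by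
    convert hasSum_geometric_two' 1 using 1
    ext n
    rw [div_pow, one_pow, pow_succ, div_div, mul_comm]
  have h := tendsto_tsum_of_dominated_convergence (𝓕 := l)
    (f := fun a n => (1 / 2 : ℝ) ^ (n + 1) * gAvg ψ g (n + 1) (u a))
    hweights.summable (fun n => (hlim n).const_mul _)
    (Eventually.of_forall fun a n => by
      rw [norm_mul, Real.norm_eq_abs, abs_of_pos (by positivity)]
      exact mul_le_of_le_one_right (by positivity) (abs_gAvg_le_one ψ g hg_bdd _ _))
  rwa [tsum_mul_right, hweights.tsum_eq, one_mul] at h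

end FlowAverages

theorem stmt_9_general
    {M : Type*} [TopologicalSpace M] (ψ : ℝ → M → M)
    (hcont : Continuous fun q : ℝ × M => ψ q.1 q.2)
    (hadd : ∀ s t x, ψ (s + t) x = ψ s (ψ t x))
    (g : M → ℝ) (hg : Continuous g) (hg01 : ∀ x, g x ∈ Set.Icc (0 : ℝ) 1)
    (x : M) (hx : x ∈ Xset ψ g 0 1) :
    Filter.Tendsto (fun t => pFun ψ g (ψ t x)) Filter.atBot (nhds 0) ∧
    Filter.Tendsto (fun t => pFun ψ g (ψ t x)) Filter.atTop (nhds 1) := by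
  have hg_bdd : ∀ y, |g y| ≤ 1 := fun y => abs_le.mpr ⟨by linarith [(hg01 y).1], (hg01 y).2⟩
  constructor
  · exact tendsto_pFun ψ g hg_bdd _ fun n =>
      tendsto_gAvg_flow ψ g hcont hadd hg hg_bdd x
        (fun s => hx.1.comp (tendsto_atBot_add_const_left _ s tendsto_id)) n.succ_ne_zero
  · exact tendsto_pFun ψ g hg_bdd _ fun n =>
      tendsto_gAvg_flow ψ g hcont hadd hg hg_bdd x
        (fun s => hx.2.comp (tendsto_atTop_add_const_left _ s tendsto_id)) n.succ_ne_zero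

/-- assume `ℓ < 1`.  For every `x ∈ X_{0,1}`,
`p(ψ_t(x)) → 0` as `t → −∞` and `p(ψ_t(x)) → 1` as `t → +∞`. -/
theorem stmt_9
    {M : Type*} [TopologicalSpace M] (ψ : ℝ → M → M)
    (hcont : Continuous fun q : ℝ × M => ψ q.1 q.2)
    (hzero : ∀ x, ψ 0 x = x)
    (hadd : ∀ s t x, ψ (s + t) x = ψ s (ψ t x))
    (g : M → ℝ) (hg : Continuous g) (hg01 : ∀ x, g x ∈ Set.Icc (0 : ℝ) 1)
    (ℓ : ℝ) (hℓ : 0 < ℓ)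
    (hgate : ∀ x, 0 < g x → g x < 1 → ∀ t : ℝ, ℓ < |t| →
      g (ψ t x) = 0 ∨ g (ψ t x) = 1)
    (hℓ1 : ℓ < 1)
    (x : M) (hx : x ∈ Xset ψ g 0 1) :
    Filter.Tendsto (fun t => pFun ψ g (ψ t x)) Filter.atBot (nhds 0) ∧
    Filter.Tendsto (fun t => pFun ψ g (ψ t x)) Filter.atTop (nhds 1) :=
  stmt_9_general ψ hcont hadd g hg hg01 x hx
end

section
/- Assume ℓ < 1. Then for every x ∈ X_{0,1}, the function s ↦ p(ψ_s(x)) is differentiable at s = 0 with derivative c = Σ_{n=1}^{∞} 2^{−n} · (1/(2n)) · ( g(ψ_n(x)) − g(ψ_{−n}(x)) ), and this derivative satisfies c > 0. -/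
open Filter Topology

open Set

/-! Along the orbit write `G t = g (ψ t x)`. Then `p (ψ s x)` is a weighted sum of the sliding
averages of `G` over the windows `[s - n, s + n]`; the derivative `(G (s + n) - G (s - n)) / (2n)`
of each is bounded by `1`, so the series may be differentiated termwise.

For positivity, the orbit of a point of `X_{0,1}` passes through some `t₀` with `G t₀ = 1/2`, and
the gate condition forces `G` into `{0, 1}` off `[t₀ - ℓ, t₀ + ℓ]`. Each of the two half-lines is
connected, so `G` is constant there, and the limits at `±∞` identify the constants: `G = 0` to the
left and `G = 1` to the right. As `ℓ < 1 ≤ n`, the points `-n` and `n` cannot both lie in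
`[t₀ - ℓ, t₀ + ℓ]`, so every term `G n - G (-n)` of the series is nonnegative, and it equals `1`
once `n > |t₀| + ℓ`. -/

noncomputable def slidingAvg (G : ℝ → ℝ) (r s : ℝ) : ℝ :=
  1 / (2 * r) * ∫ t in -r..r, G (t + s)

theorem gAvg_flow_eq_slidingAvg {M : Type*} {ψ : ℝ → M → M}
    (hadd : ∀ s t x, ψ (s + t) x = ψ s (ψ t x)) (g : M → ℝ) (n : ℕ) (x : M) (s : ℝ) :
    gAvg ψ g n (ψ s x) = slidingAvg (fun t => g (ψ t x)) n s := by
  simp only [gAvg, slidingAvg, hadd]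

theorem hasDerivAt_slidingAvg {G : ℝ → ℝ} (hG : Continuous G) (r s : ℝ) :
    HasDerivAt (slidingAvg G r) (1 / (2 * r) * (G (r + s) - G (-r + s))) s := by
  set H : ℝ → ℝ := fun u => ∫ t in (0 : ℝ)..u, G t
  have hH : ∀ u, HasDerivAt H (G u) u := fun u => (hG.integral_hasStrictDerivAt 0 u).hasDerivAt
  have hAvg : slidingAvg G r = fun s => 1 / (2 * r) * (H (r + s) - H (-r + s)) := by
    funext s
    rw [slidingAvg, intervalIntegral.integral_comp_add_right (fun t => G t),
      intervalIntegral.integral_interval_sub_left (hG.intervalIntegrable _ _)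
        (hG.intervalIntegrable _ _)]
  rw [hAvg]
  exact (((hH _).comp_const_add r s).sub ((hH _).comp_const_add (-r) s)).const_mul _

section Bounded

variable {G : ℝ → ℝ} {C : ℝ} (hC : ∀ t, |G t| ≤ C)
include hC

theorem abs_slidingAvg_le {r : ℝ} (hr : 0 < r) (s : ℝ) : |slidingAvg G r s| ≤ C := by
  have hint : |∫ t in -r..r, G (t + s)| ≤ C * |r - -r| := by
    simpa only [Real.norm_eq_abs] using
      intervalIntegral.norm_integral_le_of_norm_le_const (f := fun t => G (t + s))
        fun t _ => by simpa only [Real.norm_eq_abs] using hC (t + s)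
  rw [show |r - -r| = 2 * r by rw [sub_neg_eq_add, ← two_mul, abs_of_pos (by positivity)]] at hint
  rw [slidingAvg, abs_mul, abs_of_pos (by positivity : (0 : ℝ) < 1 / (2 * r))]
  calc 1 / (2 * r) * |∫ t in -r..r, G (t + s)| ≤ 1 / (2 * r) * (C * (2 * r)) := by gcongr
    _ = C := by field_simp

theorem abs_slidingAvg_deriv_le {r : ℝ} (hr : 1 ≤ r) (s : ℝ) :
    |1 / (2 * r) * (G (r + s) - G (-r + s))| ≤ C := by
  have hdiff : |G (r + s) - G (-r + s)| ≤ 2 * C := by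
    linarith [abs_sub (G (r + s)) (G (-r + s)), hC (r + s), hC (-r + s)]
  rw [abs_mul, abs_of_pos (by positivity : (0 : ℝ) < 1 / (2 * r))]
  calc 1 / (2 * r) * |G (r + s) - G (-r + s)| ≤ 1 / (2 * r) * (2 * C) := by gcongr
    _ = C / r := by field_simp
    _ ≤ C := div_le_self ((abs_nonneg _).trans (hC 0)) hr

end Bounded

theorem summable_half_pow_mul {a : ℕ → ℝ} {C : ℝ} (ha : ∀ n, |a n| ≤ C) :
    Summable fun n : ℕ => (1 / 2 : ℝ) ^ (n + 1) * a n := by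
  have hgeom : Summable fun n : ℕ => C * (1 / 2 : ℝ) ^ (n + 1) :=
    ((summable_nat_add_iff 1).mpr summable_geometric_two).mul_left C
  refine hgeom.of_norm_bounded fun n => ?_
  rw [Real.norm_eq_abs, abs_mul, abs_of_pos (by positivity), mul_comm]
  gcongr
  exact ha n

theorem hasDerivAt_tsum_slidingAvg {G : ℝ → ℝ} (hG : Continuous G) {C : ℝ}
    (hC : ∀ t, |G t| ≤ C) (s : ℝ) :
    HasDerivAt (fun s => ∑' n : ℕ, (1 / 2 : ℝ) ^ (n + 1) * slidingAvg G ((n : ℝ) + 1) s)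
      (∑' n : ℕ, (1 / 2 : ℝ) ^ (n + 1) *
        (1 / (2 * ((n : ℝ) + 1)) * (G ((n + 1) + s) - G (-(n + 1) + s)))) s := by
  refine hasDerivAt_tsum (u := fun n => (1 / 2 : ℝ) ^ (n + 1) * C)
    (summable_half_pow_mul (a := fun _ => C) fun _ => le_rfl)
    (fun n s => (hasDerivAt_slidingAvg hG _ s).const_mul _) (fun n s => ?_)
    (summable_half_pow_mul fun n => abs_slidingAvg_le hC (by positivity) 0) s
  rw [Real.norm_eq_abs, abs_mul, abs_of_pos (by positivity)]
  gcongr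
  exact abs_slidingAvg_deriv_le hC (by simp) s

theorem IsPreconnected.eqOn_of_mapsTo_finite_of_tendsto {X β : Type*} [TopologicalSpace X]
    [TopologicalSpace β] [T2Space β] {S : Set X} (hS : IsPreconnected S) {f : X → β}
    (hf : ContinuousOn f S) {T : Set β} (hT : T.Finite) (hfT : MapsTo f S T) {l : Filter X}
    [l.NeBot] (hSl : S ∈ l) {c : β} (hc : Tendsto f l (𝓝 c)) : EqOn f (fun _ => c) S := by
  intro x hx
  have hconst : f =ᶠ[l] fun _ => f x :=
    eventually_of_mem hSl fun y hy => hS.constant_of_mapsTo hT.isDiscrete hf hfT hy hx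
  exact tendsto_nhds_unique (tendsto_const_nhds.congr' hconst.symm) hc

theorem exists_step_of_gate {G : ℝ → ℝ} (hG : Continuous G)
    (hbot : Tendsto G atBot (𝓝 0)) (htop : Tendsto G atTop (𝓝 1)) {ℓ : ℝ}
    (hgate : ∀ t₀, 0 < G t₀ → G t₀ < 1 → ∀ u, ℓ < |u - t₀| → G u = 0 ∨ G u = 1) :
    ∃ t₀, (∀ u < t₀ - ℓ, G u = 0) ∧ ∀ u > t₀ + ℓ, G u = 1 := by
  obtain ⟨t₀, ht₀⟩ : (1 / 2 : ℝ) ∈ range G :=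
    mem_range_of_exists_le_of_exists_ge hG
      (hbot.eventually (ge_mem_nhds (by norm_num))).exists
      (htop.eventually (le_mem_nhds (by norm_num))).exists
  have hgate₀ := hgate t₀ (by rw [ht₀]; norm_num) (by rw [ht₀]; norm_num)
  refine ⟨t₀, fun u hu => ?_, fun u hu => ?_⟩
  · refine isPreconnected_Iio.eqOn_of_mapsTo_finite_of_tendsto hG.continuousOn
      (T := {0, 1}) (toFinite _) (fun v hv => hgate₀ v ?_) (Iio_mem_atBot _) hbot hu
    exact lt_abs.mpr (Or.inr (by linarith [mem_Iio.mp hv]))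
  · refine isPreconnected_Ioi.eqOn_of_mapsTo_finite_of_tendsto hG.continuousOn
      (T := {0, 1}) (toFinite _) (fun v hv => hgate₀ v ?_) (Ioi_mem_atTop _) htop hu
    exact lt_abs.mpr (Or.inl (by linarith [mem_Ioi.mp hv]))

theorem tsum_pos_of_step {G : ℝ → ℝ} (hG01 : ∀ t, G t ∈ Icc (0 : ℝ) 1) {ℓ t₀ : ℝ} (hℓ : ℓ < 1)
    (hleft : ∀ u < t₀ - ℓ, G u = 0) (hright : ∀ u > t₀ + ℓ, G u = 1) :
    0 < ∑' n : ℕ, (1 / 2 : ℝ) ^ (n + 1) *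
      (1 / (2 * ((n : ℝ) + 1)) * (G ((n : ℝ) + 1) - G (-((n : ℝ) + 1)))) := by
  have hGabs : ∀ t, |G t| ≤ 1 := fun t => (abs_of_nonneg (hG01 t).1).trans_le (hG01 t).2
  have hmono : ∀ r, ℓ < r → G (-r) ≤ G r := by
    intro r hr
    by_cases h : -r < t₀ - ℓ
    · rw [hleft _ h]; exact (hG01 r).1
    · rw [hright r (by linarith)]; exact (hG01 _).2
  obtain ⟨N, hN⟩ := exists_nat_gt (|t₀| + ℓ)
  refine Summable.tsum_pos (summable_half_pow_mul (C := 1) fun n => ?_) (fun n => ?_) N ?_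
  · simpa only [add_zero] using abs_slidingAvg_deriv_le hGabs (r := (n : ℝ) + 1) (by simp) 0
  · have hn : ℓ < (n : ℝ) + 1 := by linarith [n.cast_nonneg (α := ℝ)]
    have := sub_nonneg.mpr (hmono _ hn)
    positivity
  · rw [hright _ (by linarith [le_abs_self t₀]), hleft _ (by linarith [neg_abs_le t₀])]
    positivity

theorem stmt_10_general
    {M : Type*} [TopologicalSpace M] (ψ : ℝ → M → M)
    (hcont : Continuous fun q : ℝ × M => ψ q.1 q.2)
    (hadd : ∀ s t x, ψ (s + t) x = ψ s (ψ t x))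
    (g : M → ℝ) (hg : Continuous g) (hg01 : ∀ x, g x ∈ Set.Icc (0 : ℝ) 1)
    (ℓ : ℝ)
    (hgate : ∀ x, 0 < g x → g x < 1 → ∀ t : ℝ, ℓ < |t| →
      g (ψ t x) = 0 ∨ g (ψ t x) = 1)
    (hℓ1 : ℓ < 1)
    (x : M) (hx : x ∈ Xset ψ g 0 1) :
    HasDerivAt (fun s => pFun ψ g (ψ s x))
      (∑' n : ℕ, (1 / 2 : ℝ) ^ (n + 1) *
        ((1 / (2 * ((n : ℝ) + 1))) *
          (g (ψ ((n : ℝ) + 1) x) - g (ψ (-((n : ℝ) + 1)) x)))) 0 ∧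
    0 < ∑' n : ℕ, (1 / 2 : ℝ) ^ (n + 1) *
        ((1 / (2 * ((n : ℝ) + 1))) *
          (g (ψ ((n : ℝ) + 1) x) - g (ψ (-((n : ℝ) + 1)) x))) := by
  set G : ℝ → ℝ := fun t => g (ψ t x)
  have hG : Continuous G := hg.comp (hcont.comp (continuous_id.prodMk continuous_const))
  have hG01 : ∀ t, G t ∈ Icc (0 : ℝ) 1 := fun t => hg01 _
  have hGabs : ∀ t, |G t| ≤ 1 := fun t => (abs_of_nonneg (hG01 t).1).trans_le (hG01 t).2
  have hGgate : ∀ t₀, 0 < G t₀ → G t₀ < 1 → ∀ u, ℓ < |u - t₀| → G u = 0 ∨ G u = 1 := by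
    intro t₀ h₀ h₁ u hu
    simpa only [G, ← hadd, sub_add_cancel] using hgate _ h₀ h₁ (u - t₀) hu
  obtain ⟨t₀, hleft, hright⟩ := exists_step_of_gate hG hx.1 hx.2 hGgate
  refine ⟨?_, tsum_pos_of_step hG01 hℓ1 hleft hright⟩
  have hp : (fun s => pFun ψ g (ψ s x)) =
      fun s => ∑' n : ℕ, (1 / 2 : ℝ) ^ (n + 1) * slidingAvg G ((n : ℝ) + 1) s := by
    funext s
    simp only [pFun, gAvg_flow_eq_slidingAvg hadd, Nat.cast_add, Nat.cast_one]
    rfl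
  simpa only [hp, add_zero] using hasDerivAt_tsum_slidingAvg hG hGabs 0

/-- assume `ℓ < 1`.  For every `x ∈ X_{0,1}`, the function
`s ↦ p(ψ_s(x))` is differentiable at `s = 0` with derivative
`c = Σ_{n=1}^∞ 2^{−n} ⬝ (1/(2n)) ⬝ (g(ψ_n(x)) − g(ψ_{−n}(x)))`,
and `c > 0`. -/
theorem stmt_10
    {M : Type*} [TopologicalSpace M] (ψ : ℝ → M → M)
    (hcont : Continuous fun q : ℝ × M => ψ q.1 q.2)
    (hzero : ∀ x, ψ 0 x = x)
    (hadd : ∀ s t x, ψ (s + t) x = ψ s (ψ t x))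
    (g : M → ℝ) (hg : Continuous g) (hg01 : ∀ x, g x ∈ Set.Icc (0 : ℝ) 1)
    (ℓ : ℝ) (hℓ : 0 < ℓ)
    (hgate : ∀ x, 0 < g x → g x < 1 → ∀ t : ℝ, ℓ < |t| →
      g (ψ t x) = 0 ∨ g (ψ t x) = 1)
    (hℓ1 : ℓ < 1)
    (x : M) (hx : x ∈ Xset ψ g 0 1) :
    HasDerivAt (fun s => pFun ψ g (ψ s x))
      (∑' n : ℕ, (1 / 2 : ℝ) ^ (n + 1) *
        ((1 / (2 * ((n : ℝ) + 1))) *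
          (g (ψ ((n : ℝ) + 1) x) - g (ψ (-((n : ℝ) + 1)) x)))) 0 ∧
    0 < ∑' n : ℕ, (1 / 2 : ℝ) ^ (n + 1) *
        ((1 / (2 * ((n : ℝ) + 1))) *
          (g (ψ ((n : ℝ) + 1) x) - g (ψ (-((n : ℝ) + 1)) x))) :=
  stmt_10_general ψ hcont hadd g hg hg01 ℓ hgate hℓ1 x hx
end

section
/- Assume ℓ < 1. Then for every x ∈ X_{0,1}, the function t ↦ p(ψ_t(x)) is strictly increasing on ℝ. -/
open Filter Topology

open Set

/-! The orbit profile `F t = g (ψ t x)` of a point of `X_{0,1}` is a continuous step: the gate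
condition at a time `c` with `F c = 1/2` forces `F` into `{0, 1}` away from `[c - ℓ, c + ℓ]`, and by
connectedness `F = 0` on the left of that interval and `F = 1` on its right. In time `t` the average
`g_n (ψ t x)` is the mean of `F` over the window `[t - n, t + n]`; moving the window from `a` to `b`
trades the values of `F` on `[a - n, b - n]` for those on `[a + n, b + n]`, which lie `2n ≥ 2 > 2ℓ`
to the right, so every `g_n` is nondecreasing along the orbit, and strictly increasing once the
window is wide enough to reach the step from both `a` and `b`. -/

noncomputable def windowAvg (F : ℝ → ℝ) (m t : ℝ) : ℝ :=
  1 / (2 * m) * ∫ u in (t - m)..(t + m), F u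

theorem gAvg_flow {M : Type*} {ψ : ℝ → M → M} (hadd : ∀ s t x, ψ (s + t) x = ψ s (ψ t x))
    (g : M → ℝ) (n : ℕ) (x : M) (s : ℝ) :
    gAvg ψ g n (ψ s x) = windowAvg (fun t => g (ψ t x)) n s := by
  simp only [gAvg, windowAvg, ← hadd, intervalIntegral.integral_comp_add_right
    (fun t => g (ψ t x)) s]
  congr 2 <;> ring

theorem windowAvg_sub_windowAvg {F : ℝ → ℝ} (hF : Continuous F) (m a b : ℝ) :
    windowAvg F m b - windowAvg F m a =
      1 / (2 * m) * ∫ u in (a - m)..(b - m), (F (u + 2 * m) - F u) := by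
  have hshift : ∫ u in (a - m)..(b - m), F (u + 2 * m) = ∫ u in (a + m)..(b + m), F u := by
    rw [intervalIntegral.integral_comp_add_right]
    congr 1 <;> ring
  have hint : ∀ p q : ℝ, IntervalIntegrable F MeasureTheory.volume p q :=
    hF.intervalIntegrable
  rw [windowAvg, windowAvg, ← mul_sub, intervalIntegral.integral_sub
    (f := fun u => F (u + 2 * m)) ((hF.comp (continuous_add_const _)).intervalIntegrable _ _)
    (hint _ _), hshift]
  have hleft := intervalIntegral.integral_add_adjacent_intervals (hint (a - m) (a + m))
    (hint (a + m) (b + m))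
  have hright := intervalIntegral.integral_add_adjacent_intervals (hint (a - m) (b - m))
    (hint (b - m) (b + m))
  congr 1
  linarith

theorem monotone_windowAvg {F : ℝ → ℝ} {m : ℝ} (hF : Continuous F) (hm : 0 < m)
    (hshift : ∀ u, F u ≤ F (u + 2 * m)) : Monotone (windowAvg F m) := fun a b hab =>
  sub_nonneg.1 <| by
    rw [windowAvg_sub_windowAvg hF]
    exact mul_nonneg (by positivity)
      (intervalIntegral.integral_nonneg (by linarith) fun u _ => sub_nonneg.2 (hshift u))

theorem windowAvg_lt_windowAvg {F : ℝ → ℝ} {m a b : ℝ} (hF : Continuous F) (hm : 0 < m)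
    (hab : a < b) (hshift : ∀ u ∈ Ioo (a - m) (b - m), F u < F (u + 2 * m)) :
    windowAvg F m a < windowAvg F m b :=
  sub_pos.1 <| by
    rw [windowAvg_sub_windowAvg hF]
    exact mul_pos (by positivity) <| intervalIntegral.intervalIntegral_pos_of_pos_on
      (((hF.comp (continuous_add_const _)).sub hF).intervalIntegrable _ _)
      (fun u hu => sub_pos.2 (hshift u hu)) (by linarith)

theorem abs_windowAvg_le {F : ℝ → ℝ} {m : ℝ} (hm : 0 < m) (hF : ∀ u, |F u| ≤ 1) (t : ℝ) :
    |windowAvg F m t| ≤ 1 := by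
  have hint := intervalIntegral.norm_integral_le_of_norm_le_const (a := t - m) (b := t + m)
    (C := 1) fun u _ => (Real.norm_eq_abs _).trans_le (hF u)
  rw [Real.norm_eq_abs, show t + m - (t - m) = 2 * m by ring,
    abs_of_pos (by positivity : 0 < 2 * m), one_mul] at hint
  rw [windowAvg, abs_mul, abs_of_pos (by positivity)]
  calc 1 / (2 * m) * |∫ u in (t - m)..(t + m), F u| ≤ 1 / (2 * m) * (2 * m) := by gcongr
    _ = 1 := by field_simp

theorem strictMono_tsum_mul {w : ℕ → ℝ} {f : ℕ → ℝ → ℝ} (hw : ∀ n, 0 < w n)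
    (hws : Summable w) (hf : ∀ n t, |f n t| ≤ 1) (hmono : ∀ n, Monotone (f n))
    (hstrict : ∀ a b, a < b → ∃ n, f n a < f n b) :
    StrictMono fun t => ∑' n, w n * f n t := by
  have hsum : ∀ t, Summable fun n => w n * f n t := fun t =>
    hws.of_norm_bounded fun n => by
      rw [Real.norm_eq_abs, abs_mul, abs_of_pos (hw n)]
      exact mul_le_of_le_one_right (hw n).le (hf n t)
  intro a b hab
  obtain ⟨N, hN⟩ := hstrict a b hab
  exact (hsum a).tsum_lt_tsum (fun n => mul_le_mul_of_nonneg_left (hmono n hab.le) (hw n).le)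
    (mul_lt_mul_of_pos_left hN (hw N)) (hsum b)

theorem exists_eq_zero_eq_one_of_gate {F : ℝ → ℝ} {ℓ : ℝ} (hF : Continuous F)
    (hbot : Tendsto F atBot (𝓝 0)) (htop : Tendsto F atTop (𝓝 1))
    (hgate : ∀ s u, 0 < F s → F s < 1 → ℓ < |u - s| → F u = 0 ∨ F u = 1) :
    ∃ c, (∀ u < c - ℓ, F u = 0) ∧ (∀ u, c + ℓ < u → F u = 1) := by
  have hlow := hbot.eventually (eventually_lt_nhds (by norm_num : (0 : ℝ) < 1 / 2))
  have hhigh := htop.eventually (eventually_gt_nhds (by norm_num : (1 / 2 : ℝ) < 1))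
  obtain ⟨a, ha⟩ := hlow.exists
  obtain ⟨b, hb⟩ := hhigh.exists
  obtain ⟨c, hc⟩ := intermediate_value_univ a b hF ⟨ha.le, hb.le⟩
  have hmaps : ∀ S ⊆ {u | ℓ < |u - c|}, MapsTo F S {0, 1} := fun S hS u hu =>
    hgate c u (by rw [hc]; norm_num) (by rw [hc]; norm_num) (hS hu)
  refine ⟨c, fun u hu => ?_, fun u hu => ?_⟩
  · have hS : Iio (c - ℓ) ⊆ {u | ℓ < |u - c|} := fun v (hv : v < c - ℓ) =>
      (show ℓ < c - v by linarith).trans_le (abs_sub_comm v c ▸ le_abs_self _)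
    obtain ⟨u₀, hu₀, hu₀S⟩ := (hlow.and (eventually_lt_atBot (c - ℓ))).exists
    have hconst := isPreconnected_Iio.constant_of_mapsTo (toFinite _).isDiscrete
      hF.continuousOn (hmaps _ hS) hu hu₀S
    rcases hmaps _ hS hu with h | h
    · exact h
    · linarith [mem_singleton_iff.1 h]
  · have hS : Ioi (c + ℓ) ⊆ {u | ℓ < |u - c|} := fun v (hv : c + ℓ < v) =>
      (show ℓ < v - c by linarith).trans_le (le_abs_self _)
    obtain ⟨u₀, hu₀, hu₀S⟩ := (hhigh.and (eventually_gt_atTop (c + ℓ))).exists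
    have hconst := isPreconnected_Ioi.constant_of_mapsTo (toFinite _).isDiscrete
      hF.continuousOn (hmaps _ hS) hu hu₀S
    rcases hmaps _ hS hu with h | h
    · linarith [mem_singleton_iff.1 h]
    · exact h

theorem strictMono_tsum_windowAvg_of_step {F : ℝ → ℝ} {c ℓ : ℝ} (hℓ : ℓ < 1)
    (hF : Continuous F) (hF01 : ∀ u, F u ∈ Icc 0 1) (h0 : ∀ u < c - ℓ, F u = 0)
    (h1 : ∀ u, c + ℓ < u → F u = 1) :
    StrictMono fun t => ∑' n : ℕ, (1 / 2 : ℝ) ^ (n + 1) * windowAvg F (n + 1) t := by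
  have hshift : ∀ m : ℝ, 1 ≤ m → ∀ u, F u ≤ F (u + 2 * m) := fun m hm u => by
    rcases le_or_gt (u + 2 * m) (c + ℓ) with h | h
    · rw [h0 u (by linarith)]
      exact (hF01 _).1
    · rw [h1 _ h]
      exact (hF01 u).2
  refine strictMono_tsum_mul (fun n => by positivity)
    ((summable_nat_add_iff 1).2 summable_geometric_two)
    (fun n => abs_windowAvg_le (by positivity) fun u => abs_le.2 ⟨by linarith [(hF01 u).1],
      (hF01 u).2⟩)
    (fun n => monotone_windowAvg hF (by positivity) (hshift _ (by simp))) fun a b hab => ?_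
  obtain ⟨N, hN⟩ := exists_nat_ge (max (c + ℓ - a) (b - c + ℓ))
  have hNa := (le_max_left _ _).trans hN
  have hNb := (le_max_right _ _).trans hN
  refine ⟨N, windowAvg_lt_windowAvg hF (by positivity) hab fun u hu => ?_⟩
  rw [h0 u (by linarith [hu.2]), h1 _ (by linarith [hu.1])]
  exact zero_lt_one

theorem stmt_11_general
    {M : Type*} [TopologicalSpace M] (ψ : ℝ → M → M)
    (hcont : Continuous fun q : ℝ × M => ψ q.1 q.2)
    (hadd : ∀ s t x, ψ (s + t) x = ψ s (ψ t x))
    (g : M → ℝ) (hg : Continuous g) (hg01 : ∀ x, g x ∈ Set.Icc (0 : ℝ) 1)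
    (ℓ : ℝ)
    (hgate : ∀ x, 0 < g x → g x < 1 → ∀ t : ℝ, ℓ < |t| →
      g (ψ t x) = 0 ∨ g (ψ t x) = 1)
    (hℓ1 : ℓ < 1)
    (x : M) (hx : x ∈ Xset ψ g 0 1) :
    StrictMono (fun t : ℝ => pFun ψ g (ψ t x)) := by
  obtain ⟨hbot, htop⟩ := hx
  have hF : Continuous fun t => g (ψ t x) :=
    hg.comp (hcont.comp (continuous_id.prodMk continuous_const))
  obtain ⟨c, h0, h1⟩ := exists_eq_zero_eq_one_of_gate hF hbot htop fun s u hs0 hs1 hu => by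
    simpa only [← hadd, sub_add_cancel] using hgate (ψ s x) hs0 hs1 (u - s) hu
  simpa only [pFun, gAvg_flow hadd, Nat.cast_add_one] using
    strictMono_tsum_windowAvg_of_step hℓ1 hF (fun u => hg01 _) h0 h1

/-- assume `ℓ < 1`.  For every `x ∈ X_{0,1}`, the function
`t ↦ p(ψ_t(x))` is strictly increasing on `ℝ`. -/
theorem stmt_11
    {M : Type*} [TopologicalSpace M] (ψ : ℝ → M → M)
    (hcont : Continuous fun q : ℝ × M => ψ q.1 q.2)
    (hzero : ∀ x, ψ 0 x = x)
    (hadd : ∀ s t x, ψ (s + t) x = ψ s (ψ t x))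
    (g : M → ℝ) (hg : Continuous g) (hg01 : ∀ x, g x ∈ Set.Icc (0 : ℝ) 1)
    (ℓ : ℝ) (hℓ : 0 < ℓ)
    (hgate : ∀ x, 0 < g x → g x < 1 → ∀ t : ℝ, ℓ < |t| →
      g (ψ t x) = 0 ∨ g (ψ t x) = 1)
    (hℓ1 : ℓ < 1)
    (x : M) (hx : x ∈ Xset ψ g 0 1) :
    StrictMono (fun t : ℝ => pFun ψ g (ψ t x)) :=
  stmt_11_general ψ hcont hadd g hg hg01 ℓ hgate hℓ1 x hx
end

section
/- Assume ℓ < 1. Then for each pair (i,j) with i,j ∈ {0,1}, the set X_{i,j} ∩ p^{-1}(1/2) is open in the subspace topology of p^{-1}(1/2). -/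
open Filter Topology

/-!
On the orbit of `x`, `g` can leave `{0, 1}` only during a time window of length `2ℓ` around a
single transition time `s`; outside it `t ↦ g (ψ t x)` is `{0, 1}`-valued and hence, by
connectedness, constant on each side. If `p x = 1/2`, the orbit is not constantly `0` or `1` on `[-2, 2]`
(that would force `g₁ = g₂ ∈ {0, 1}` and `p x` within `1/4` of `0` or `1`), so `|s| ≤ 2 + ℓ`.
Hence on all of `p⁻¹(1/2)` the orbit has settled by the uniform time `T = 2ℓ + 3`, and
`X_{i,j} ∩ p⁻¹(1/2)` is cut out by `g (ψ (-T) y) = i` and `g (ψ T y) = j`, level sets of continuous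
`{0, 1}`-valued functions.
-/

open Set

theorem Continuous.isOpen_setOf_eq_of_mem_finite {X Y : Type*} [TopologicalSpace X]
    [TopologicalSpace Y] [T1Space Y] {F : X → Y} (hF : Continuous F) {S : Set Y}
    (hS : S.Finite) (hFS : ∀ x, F x ∈ S) (c : Y) : IsOpen {x | F x = c} := by
  have := hS.to_subtype
  exact (isOpen_discrete {z : S | (z : Y) = c}).preimage (hF.codRestrict hFS)

theorem tendsto_atBot_nhds_iff_of_forall_le {α Y : Type*} [SemilatticeInf α] [Nonempty α]
    [TopologicalSpace Y] [T1Space Y] {f : α → Y} {a : α} (hf : ∀ t ≤ a, f t = f a) {y : Y} :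
    Tendsto f atBot (𝓝 y) ↔ f a = y := by
  rw [tendsto_congr' ((eventually_le_atBot a).mono hf), tendsto_const_nhds_iff]

theorem tendsto_atTop_nhds_iff_of_forall_ge {α Y : Type*} [SemilatticeSup α] [Nonempty α]
    [TopologicalSpace Y] [T1Space Y] {f : α → Y} {a : α} (hf : ∀ t, a ≤ t → f t = f a) {y : Y} :
    Tendsto f atTop (𝓝 y) ↔ f a = y := by
  rw [tendsto_congr' ((eventually_ge_atTop a).mono hf), tendsto_const_nhds_iff]

theorem tsum_half_pow_mul_mem_Icc {a : ℕ → ℝ} (ha : ∀ n, a n ∈ Icc 0 1) {c : ℝ}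
    (h0 : a 0 = c) (h1 : a 1 = c) :
    ∑' n, (1 / 2 : ℝ) ^ (n + 1) * a n ∈ Icc (3 / 4 * c) (3 / 4 * c + 1 / 4) := by
  have hgeom : Summable fun n : ℕ => (1 / 2 : ℝ) ^ (n + 3) :=
    (summable_nat_add_iff 3).mpr summable_geometric_two
  have hsum : Summable fun n => (1 / 2 : ℝ) ^ (n + 1) * a n :=
    .of_nonneg_of_le (fun n => mul_nonneg (by positivity) (ha n).1)
      (fun n => mul_le_of_le_one_right (by positivity) (ha n).2)
      ((summable_nat_add_iff 1).mpr summable_geometric_two)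
  have htail_le : ∑' n, (1 / 2 : ℝ) ^ (n + 2 + 1) * a (n + 2) ≤ 1 / 4 :=
    calc ∑' n, (1 / 2 : ℝ) ^ (n + 2 + 1) * a (n + 2)
        ≤ ∑' n : ℕ, (1 / 2 : ℝ) ^ (n + 3) :=
          ((summable_nat_add_iff 2).mpr hsum).tsum_le_tsum
            (fun n => mul_le_of_le_one_right (by positivity) (ha _).2) hgeom
      _ = 1 / 4 := by
          simp_rw [pow_add, tsum_mul_right, tsum_geometric_two]
          norm_num
  have htail_nonneg : 0 ≤ ∑' n, (1 / 2 : ℝ) ^ (n + 2 + 1) * a (n + 2) :=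
    tsum_nonneg fun n => mul_nonneg (by positivity) (ha _).1
  rw [← hsum.sum_add_tsum_nat_add 2]
  simp only [Finset.sum_range_succ, Finset.sum_range_zero, h0, h1]
  constructor <;> linarith

theorem eq_of_isPreconnected_of_mapsTo_zero_one {α : Type*} [TopologicalSpace α] {f : α → ℝ}
    (hf : Continuous f) {S : Set α} (hS : IsPreconnected S) (hfS : MapsTo f S {0, 1}) {x y : α}
    (hx : x ∈ S) (hy : y ∈ S) : f x = f y :=
  hS.constant_of_mapsTo (toFinite _).isDiscrete hf.continuousOn hfS hx hy

section Profile

variable {f : ℝ → ℝ} {ℓ s : ℝ}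

theorem mapsTo_Iio_of_forall_lt_abs_sub (hs : ∀ t, ℓ < |t - s| → f t ∈ ({0, 1} : Set ℝ)) :
    MapsTo f (Iio (s - ℓ)) {0, 1} := fun t ht =>
  hs t (by rw [abs_sub_comm]; exact (lt_sub_comm.mp ht).trans_le (le_abs_self _))

theorem mapsTo_Ioi_of_forall_lt_abs_sub (hs : ∀ t, ℓ < |t - s| → f t ∈ ({0, 1} : Set ℝ)) :
    MapsTo f (Ioi (s + ℓ)) {0, 1} := fun t ht =>
  hs t ((lt_sub_iff_add_lt'.mpr ht).trans_le (le_abs_self _))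

theorem abs_le_of_forall_lt_abs_sub (hf : Continuous f) {a : ℝ}
    (hnot : ∀ c ∈ ({0, 1} : Set ℝ), ¬EqOn f (fun _ => c) (Icc (-a) a))
    (hs : ∀ t, ℓ < |t - s| → f t ∈ ({0, 1} : Set ℝ)) : |s| ≤ a + ℓ := by
  rw [abs_le]
  constructor
  · by_contra! h
    have hR := mapsTo_Ioi_of_forall_lt_abs_sub hs
    have hx : s + ℓ + 1 ∈ Ioi (s + ℓ) := by simp
    refine hnot _ (hR hx) fun t ht => ?_
    exact eq_of_isPreconnected_of_mapsTo_zero_one hf isPreconnected_Ioi hR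
      (show s + ℓ < t by linarith [ht.1]) hx
  · by_contra! h
    have hL := mapsTo_Iio_of_forall_lt_abs_sub hs
    have hx : s - ℓ - 1 ∈ Iio (s - ℓ) := by simp
    refine hnot _ (hL hx) fun t ht => ?_
    exact eq_of_isPreconnected_of_mapsTo_zero_one hf isPreconnected_Iio hL
      (show t < s - ℓ by linarith [ht.2]) hx

theorem tails_eq_of_not_eqOn_Icc (hf : Continuous f) (hf01 : ∀ t, f t ∈ Icc 0 1)
    (hf_gate : ∀ s, f s ∈ Ioo 0 1 → ∀ t, ℓ < |t - s| → f t ∈ ({0, 1} : Set ℝ)) {a : ℝ}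
    (hnot : ∀ c ∈ ({0, 1} : Set ℝ), ¬EqOn f (fun _ => c) (Icc (-a) a)) {T : ℝ}
    (hT : a + 2 * ℓ < T) :
    f (-T) ∈ ({0, 1} : Set ℝ) ∧ f T ∈ ({0, 1} : Set ℝ) ∧
      (∀ t ≤ -T, f t = f (-T)) ∧ ∀ t, T ≤ t → f t = f T := by
  obtain ⟨s, hs⟩ : ∃ s, f s ∈ Ioo 0 1 := by
    by_contra! h
    have h01 : MapsTo f univ {0, 1} := fun t _ =>
      Icc_sdiff_Ioo_same (zero_le_one (α := ℝ)) ▸ ⟨hf01 t, h t⟩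
    exact hnot (f 0) (h01 trivial) fun t _ =>
      eq_of_isPreconnected_of_mapsTo_zero_one hf isPreconnected_univ h01 trivial trivial
  have hsa := abs_le.mp (abs_le_of_forall_lt_abs_sub hf hnot (hf_gate s hs))
  have hL := mapsTo_Iio_of_forall_lt_abs_sub (hf_gate s hs)
  have hR := mapsTo_Ioi_of_forall_lt_abs_sub (hf_gate s hs)
  have hTL : ∀ t ≤ -T, t ∈ Iio (s - ℓ) := fun t ht => by simp only [mem_Iio]; linarith
  have hTR : ∀ t, T ≤ t → t ∈ Ioi (s + ℓ) := fun t ht => by simp only [mem_Ioi]; linarith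
  exact ⟨hL (hTL _ le_rfl), hR (hTR _ le_rfl),
    fun t ht => eq_of_isPreconnected_of_mapsTo_zero_one hf isPreconnected_Iio hL
      (hTL t ht) (hTL _ le_rfl),
    fun t ht => eq_of_isPreconnected_of_mapsTo_zero_one hf isPreconnected_Ioi hR
      (hTR t ht) (hTR _ le_rfl)⟩

end Profile

section FullerAverage

variable {M : Type*} {ψ : ℝ → M → M} {g : M → ℝ}

theorem gAvg_mem_Icc (hg01 : ∀ x, g x ∈ Icc (0 : ℝ) 1) (n : ℕ) (x : M) :
    gAvg ψ g n x ∈ Icc 0 1 := by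
  rcases n.eq_zero_or_pos with rfl | hn
  · simp [gAvg]
  have hn' : (0 : ℝ) < n := Nat.cast_pos.mpr hn
  have hnonneg : 0 ≤ ∫ t in (-(n : ℝ))..n, g (ψ t x) :=
    intervalIntegral.integral_nonneg (by linarith) fun t _ => (hg01 _).1
  have hle : ‖∫ t in (-(n : ℝ))..n, g (ψ t x)‖ ≤ 1 * |(n : ℝ) - -n| :=
    intervalIntegral.norm_integral_le_of_norm_le_const fun t _ => by
      rw [Real.norm_of_nonneg (hg01 _).1]
      exact (hg01 _).2
  rw [Real.norm_of_nonneg hnonneg, abs_of_pos (by linarith)] at hle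
  rw [gAvg, one_div, mem_Icc, inv_mul_le_iff₀ (by positivity)]
  exact ⟨by positivity, by linarith⟩

theorem gAvg_eq_of_eqOn {n : ℕ} (hn : n ≠ 0) {x : M} {c : ℝ}
    (h : EqOn (fun t => g (ψ t x)) (fun _ => c) (Icc (-n) n)) : gAvg ψ g n x = c := by
  have hn' : (0 : ℝ) < n := Nat.cast_pos.mpr (Nat.pos_of_ne_zero hn)
  have h' : EqOn (fun t => g (ψ t x)) (fun _ => c) (uIcc (-n) n) := by
    rwa [uIcc_of_le (by linarith)]
  rw [gAvg, intervalIntegral.integral_congr h', intervalIntegral.integral_const, smul_eq_mul]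
  field_simp
  ring

theorem pFun_ne_half_of_eqOn (hg01 : ∀ x, g x ∈ Icc (0 : ℝ) 1) {x : M} {c : ℝ}
    (hc : c ∈ ({0, 1} : Set ℝ)) (h : EqOn (fun t => g (ψ t x)) (fun _ => c) (Icc (-2) 2)) :
    pFun ψ g x ≠ 1 / 2 := by
  have hmem := tsum_half_pow_mul_mem_Icc (a := fun n => gAvg ψ g (n + 1) x)
    (fun n => gAvg_mem_Icc hg01 _ _)
    (gAvg_eq_of_eqOn one_ne_zero (h.mono (Icc_subset_Icc (by norm_num) (by norm_num))))
    (gAvg_eq_of_eqOn two_ne_zero (h.mono (Icc_subset_Icc (by norm_num) (by norm_num))))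
  intro hp
  rw [← pFun, hp] at hmem
  rcases hc with rfl | rfl <;> norm_num at hmem

end FullerAverage

theorem orbit_tails_of_pFun_eq_half {M : Type*} [TopologicalSpace M] {ψ : ℝ → M → M}
    (hcont : Continuous fun q : ℝ × M => ψ q.1 q.2)
    (hadd : ∀ s t x, ψ (s + t) x = ψ s (ψ t x))
    {g : M → ℝ} (hg : Continuous g) (hg01 : ∀ x, g x ∈ Icc (0 : ℝ) 1) {ℓ : ℝ}
    (hgate : ∀ x, 0 < g x → g x < 1 → ∀ t : ℝ, ℓ < |t| → g (ψ t x) = 0 ∨ g (ψ t x) = 1)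
    {x : M} (hx : pFun ψ g x = 1 / 2) :
    g (ψ (-(2 * ℓ + 3)) x) ∈ ({0, 1} : Set ℝ) ∧ g (ψ (2 * ℓ + 3) x) ∈ ({0, 1} : Set ℝ) ∧
      (∀ t ≤ -(2 * ℓ + 3), g (ψ t x) = g (ψ (-(2 * ℓ + 3)) x)) ∧
      ∀ t, 2 * ℓ + 3 ≤ t → g (ψ t x) = g (ψ (2 * ℓ + 3) x) := by
  refine tails_eq_of_not_eqOn_Icc (f := fun t => g (ψ t x)) (a := 2)
    (hg.comp (hcont.comp (continuous_id.prodMk continuous_const))) (fun t => hg01 _)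
    (fun s hs t ht => ?_) (fun c hc h => pFun_ne_half_of_eqOn hg01 hc h hx) (by linarith)
  have h01 := hgate _ hs.1 hs.2 _ ht
  rwa [← hadd, sub_add_cancel] at h01

theorem stmt_14_general
    {M : Type*} [TopologicalSpace M] (ψ : ℝ → M → M)
    (hcont : Continuous fun q : ℝ × M => ψ q.1 q.2)
    (hadd : ∀ s t x, ψ (s + t) x = ψ s (ψ t x))
    (g : M → ℝ) (hg : Continuous g) (hg01 : ∀ x, g x ∈ Set.Icc (0 : ℝ) 1)
    (ℓ : ℝ)
    (hgate : ∀ x, 0 < g x → g x < 1 → ∀ t : ℝ, ℓ < |t| →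
      g (ψ t x) = 0 ∨ g (ψ t x) = 1) :
    ∀ i j : ℝ, i ∈ ({0, 1} : Set ℝ) → j ∈ ({0, 1} : Set ℝ) →
      IsOpen {y : pFun ψ g ⁻¹' {(1 / 2 : ℝ)} | (y : M) ∈ Xset ψ g i j} := by
  intro i j _ _
  have htails (y : pFun ψ g ⁻¹' {(1 / 2 : ℝ)}) :=
    orbit_tails_of_pFun_eq_half hcont hadd hg hg01 hgate y.2
  have hcont_at (τ : ℝ) : Continuous fun y : pFun ψ g ⁻¹' {(1 / 2 : ℝ)} => g (ψ τ y) :=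
    hg.comp (hcont.comp (continuous_const.prodMk continuous_subtype_val))
  convert
    ((hcont_at _).isOpen_setOf_eq_of_mem_finite (toFinite _) (fun y => (htails y).1) i).inter
      ((hcont_at _).isOpen_setOf_eq_of_mem_finite (toFinite _) (fun y => (htails y).2.1) j)
    using 1
  ext y
  obtain ⟨-, -, hbot, htop⟩ := htails y
  exact and_congr (tendsto_atBot_nhds_iff_of_forall_le hbot)
    (tendsto_atTop_nhds_iff_of_forall_ge htop)

/-- assume `ℓ < 1`.  For each pair `(i,j)` with `i, j ∈ {0,1}`,
the set `X_{i,j} ∩ p⁻¹(1/2)` is open in the subspace topology of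
`p⁻¹(1/2)`. -/
theorem stmt_14
    {M : Type*} [TopologicalSpace M] (ψ : ℝ → M → M)
    (hcont : Continuous fun q : ℝ × M => ψ q.1 q.2)
    (hzero : ∀ x, ψ 0 x = x)
    (hadd : ∀ s t x, ψ (s + t) x = ψ s (ψ t x))
    (g : M → ℝ) (hg : Continuous g) (hg01 : ∀ x, g x ∈ Set.Icc (0 : ℝ) 1)
    (ℓ : ℝ) (hℓ : 0 < ℓ)
    (hgate : ∀ x, 0 < g x → g x < 1 → ∀ t : ℝ, ℓ < |t| →
      g (ψ t x) = 0 ∨ g (ψ t x) = 1)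
    (hℓ1 : ℓ < 1) :
    ∀ i j : ℝ, i ∈ ({0, 1} : Set ℝ) → j ∈ ({0, 1} : Set ℝ) →
      IsOpen {y : pFun ψ g ⁻¹' {(1 / 2 : ℝ)} | (y : M) ∈ Xset ψ g i j} :=
  stmt_14_general ψ hcont hadd g hg hg01 ℓ hgate
end
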